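/- arXiv:1806.03385 — 11 statements merged into one kernel-verified Lean document; each statement's English description precedes it below -/
import Mathlib

section
/- Let A, Ã : X → Y be linear maps between finite-dimensional real vector spaces, and let Z ≠ X be a subspace of X containing ker A + ker Ã. If Ax and Ãx are linearly dependent for every x ∈ X \ Z, then Ã = αA for some nonzero real α. -/
/-!
Off `Z` we have `B x = c x • A x` with `A x ≠ 0`, and the point is that `c` is constant there.
For `y ∉ Z` the line `t ↦ x + t • y` meets `Z` at most once, while a relation
`A x + t • A y = 0` or `B x + t • B y = 0` puts a point of that line into `Z`, since `Z`
contains both kernels. Comparing `c x`, `c y` and `c (x + t • y)` for a `t ≠ 0` with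
`x + t • y ∉ Z` gives either `c x = c y` directly or a relation between `A x` and `A y`;
rescaled by the ratios it is also a relation between `B x` and `B y`, and the two resulting
points of the line in `Z` coincide only if `c x = c y`. Finally, `B = α • A` off a proper
subspace forces it everywhere.
-/

open LinearMap

namespace Submodule

theorem eq_top_of_forall_notMem_mem {R M : Type*} [Ring R] [AddCommGroup M] [Module R M]
    {Z S : Submodule R M} (hZ : Z ≠ ⊤) (h : ∀ x ∉ Z, x ∈ S) : S = ⊤ := by
  obtain ⟨x₀, -, hx₀⟩ := SetLike.exists_of_lt (lt_top_iff_ne_top.mpr hZ)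
  refine eq_top_iff'.mpr fun z => ?_
  by_cases hz : z ∈ Z
  · have hzx₀ : z + x₀ ∉ Z := fun h' => hx₀ (by simpa using Z.sub_mem h' hz)
    simpa using S.sub_mem (h _ hzx₀) (h x₀ hx₀)
  · exact h z hz

variable {K V : Type*} [Field K] [AddCommGroup V] [Module K V] {Z : Submodule K V}

theorem eq_of_add_smul_mem {x y : V} (hy : y ∉ Z) {s t : K}
    (hs : x + s • y ∈ Z) (ht : x + t • y ∈ Z) : s = t := by
  by_contra hst
  have hmem : (s - t) • y ∈ Z := by simpa [sub_smul] using Z.sub_mem hs ht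
  exact hy ((Z.smul_mem_iff (sub_ne_zero.mpr hst)).mp hmem)

theorem exists_ne_zero_add_smul_notMem [NeZero (2 : K)] {y : V} (hy : y ∉ Z) (x : V) :
    ∃ t : K, t ≠ 0 ∧ x + t • y ∉ Z := by
  by_cases h₁ : x + (1 : K) • y ∈ Z
  · refine ⟨2, two_ne_zero, fun h₂ => ?_⟩
    have h12 : (1 : K) = 2 := eq_of_add_smul_mem hy h₁ h₂
    exact one_ne_zero (by linear_combination -h12 : (1 : K) = 0)
  · exact ⟨1, one_ne_zero, h₁⟩

end Submodule

section

variable {K V W : Type*} [Field K] [AddCommGroup V] [Module K V] [AddCommGroup W] [Module K W]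
  {A B : V →ₗ[K] W} {Z : Submodule K V}

theorem exists_eq_smul_of_ne_zero_of_dependent {u v : W} (hu : u ≠ 0)
    (hdep : ∃ a b : K, ¬(a = 0 ∧ b = 0) ∧ a • u + b • v = 0) : ∃ c : K, v = c • u := by
  by_contra! h
  obtain ⟨a, b, hab, habuv⟩ := hdep
  exact hab (LinearIndependent.pair_iff.mp
    ((LinearIndependent.pair_iff' hu).mpr fun c hc => h c hc.symm) a b habuv)

theorem add_smul_mem_of_map_add_smul_eq_zero (hA : ker A ≤ Z) {x y : V} {t : K}
    (h : A x + t • A y = 0) : x + t • y ∈ Z :=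
  hA (by simpa using h)

theorem ratio_eq_of_map_dependent (hA : ker A ≤ Z) (hB : ker B ≤ Z) {x y : V}
    (hx : x ∉ Z) (hy : y ∉ Z) {a b s k : K} (hxa : B x = a • A x) (hyb : B y = b • A y)
    (hs : s ≠ 0) (hxy : s • A x + k • A y = 0) : a = b := by
  have hk : k ≠ 0 := by
    rintro rfl
    exact smul_ne_zero hs (fun h => hx (hA h)) (by simpa using hxy)
  have hAline : s • x + k • y ∈ Z :=
    add_smul_mem_of_map_add_smul_eq_zero hA (by rwa [map_smul])
  have hAmem : (b * s) • x + (b * k) • y ∈ Z := by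
    simpa [smul_add, smul_smul] using Z.smul_mem b hAline
  have hBmem : (b * s) • x + (a * k) • y ∈ Z := by
    refine add_smul_mem_of_map_add_smul_eq_zero hB ?_
    rw [map_smul, hxa, hyb]
    linear_combination (norm := module) (a * b) • hxy
  exact mul_right_cancel₀ hk (Submodule.eq_of_add_smul_mem hy hBmem hAmem)

theorem ratio_eq_of_notMem [NeZero (2 : K)] (hA : ker A ≤ Z) (hB : ker B ≤ Z)
    (hratio : ∀ x ∉ Z, ∃ c : K, B x = c • A x) {x y : V} (hx : x ∉ Z) (hy : y ∉ Z)
    {a b : K} (hxa : B x = a • A x) (hyb : B y = b • A y) : a = b := by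
  obtain ⟨t, ht, hxty⟩ := Submodule.exists_ne_zero_add_smul_notMem hy x
  obtain ⟨c, hc⟩ := hratio _ hxty
  have hrel : (a - c) • A x + (t * (b - c)) • A y = 0 := by
    rw [map_add, map_smul, map_add, map_smul, hxa, hyb] at hc
    linear_combination (norm := module) hc
  by_cases hac : a = c
  · subst hac
    have hAy : A y ≠ 0 := fun h => hy (hB (by simp [hyb, h]))
    rw [sub_self, zero_smul, zero_add, smul_eq_zero, mul_eq_zero, sub_eq_zero] at hrel
    exact ((hrel.resolve_right hAy).resolve_left ht).symm
  · exact ratio_eq_of_map_dependent hA hB hx hy hxa hyb (sub_ne_zero.mpr hac) hrel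

end

theorem stmt0_general {X Y : Type*} [AddCommGroup X] [Module ℝ X]
    [AddCommGroup Y] [Module ℝ Y]
    (A B : X →ₗ[ℝ] Y) (Z : Submodule ℝ X) (hZ : Z ≠ ⊤)
    (hker : LinearMap.ker A ⊔ LinearMap.ker B ≤ Z)
    (hdep : ∀ x : X, x ∉ Z → ∃ a b : ℝ, ¬(a = 0 ∧ b = 0) ∧ a • A x + b • B x = 0) :
    ∃ α : ℝ, α ≠ 0 ∧ B = α • A := by
  obtain ⟨hA, hB⟩ := sup_le_iff.mp hker
  have hratio : ∀ x ∉ Z, ∃ c : ℝ, B x = c • A x := fun x hx =>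
    exists_eq_smul_of_ne_zero_of_dependent (fun h => hx (hA h)) (hdep x hx)
  obtain ⟨x₀, -, hx₀⟩ := SetLike.exists_of_lt (lt_top_iff_ne_top.mpr hZ)
  obtain ⟨α, hα⟩ := hratio x₀ hx₀
  refine ⟨α, fun h => hx₀ (hB (by simp [hα, h])), ?_⟩
  have hker_top : ker (B - α • A) = ⊤ := Submodule.eq_top_of_forall_notMem_mem hZ fun x hx => by
    obtain ⟨c, hc⟩ := hratio x hx
    simp [hc, ratio_eq_of_notMem hA hB hratio hx hx₀ hc hα]
  exact sub_eq_zero.mp (ker_eq_top.mp hker_top)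

/-- If `A, B : X → Y` are linear maps between finite-dimensional real
vector spaces, `Z ≠ X` is a subspace containing `ker A + ker B`, and `A x`, `B x`
are linearly dependent for every `x ∉ Z`, then `B = α • A` for some `α ≠ 0`. -/
theorem stmt0 {X Y : Type*} [AddCommGroup X] [Module ℝ X] [FiniteDimensional ℝ X]
    [AddCommGroup Y] [Module ℝ Y] [FiniteDimensional ℝ Y]
    (A B : X →ₗ[ℝ] Y) (Z : Submodule ℝ X) (hZ : Z ≠ ⊤)
    (hker : LinearMap.ker A ⊔ LinearMap.ker B ≤ Z)
    (hdep : ∀ x : X, x ∉ Z → ∃ a b : ℝ, ¬(a = 0 ∧ b = 0) ∧ a • A x + b • B x = 0) :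
    ∃ α : ℝ, α ≠ 0 ∧ B = α • A :=
  stmt0_general A B Z hZ hker hdep
end

section
/- Let A : X → X be a linear operator on a finite-dimensional real vector space. The following are equivalent: (i) A is nilpotent; (ii) A and αA are similar for every nonzero real α; (iii) A and αA are similar for some real α > 1. -/
/-!
A nilpotent `A` admits a grading `X = ⨁ Xᵢ` with `A Xᵢ ⊆ Xᵢ₊₁`, built top-down by choosing
complements of the kernels `ker (A ^ k)`; scaling `Xᵢ` by `αⁱ` conjugates `A` into `α • A`.
Conversely, similar maps have the same characteristic polynomial, and substituting `α X` into
`charpoly (α • A) = charpoly A` gives `αᵏ cₖ = αⁿ cₖ` for its coefficients. For `α > 1` every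
`cₖ` with `k < n` vanishes, so `charpoly A = Xⁿ` and `A` is nilpotent by Cayley–Hamilton.
-/

open Polynomial Module LinearMap

namespace LinearEquiv

variable {R E : Type*} [Ring R] [AddCommGroup E] [Module R E] {p q : Submodule R E}

noncomputable def ofIsCompl (h : IsCompl p q) (e : p ≃ₗ[R] p) (f : q ≃ₗ[R] q) : E ≃ₗ[R] E :=
  (p.prodEquivOfIsCompl q h).symm ≪≫ₗ e.prodCongr f ≪≫ₗ p.prodEquivOfIsCompl q h

@[simp]
theorem ofIsCompl_apply_left (h : IsCompl p q) (e : p ≃ₗ[R] p) (f : q ≃ₗ[R] q) (x : p) :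
    ofIsCompl h e f x = e x := by
  simp [ofIsCompl]

@[simp]
theorem ofIsCompl_apply_right (h : IsCompl p q) (e : p ≃ₗ[R] p) (f : q ≃ₗ[R] q) (x : q) :
    ofIsCompl h e f x = f x := by
  simp [ofIsCompl]

theorem conj_eq_iff_apply_eq {R M₁ M₂ : Type*} [CommSemiring R] [AddCommMonoid M₁]
    [AddCommMonoid M₂] [Module R M₁] [Module R M₂] (e : M₁ ≃ₗ[R] M₂) (f : Module.End R M₁)
    (g : Module.End R M₂) : e.conj f = g ↔ ∀ x, e (f x) = g (e x) :=
  ⟨fun h x => by rw [← h, conj_apply_apply, symm_apply_apply],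
    fun h => by ext x; rw [conj_apply_apply, h, apply_symm_apply]⟩

end LinearEquiv

theorem Matrix.charpoly_smul_comp {R n : Type*} [CommRing R] [Fintype n] [DecidableEq n]
    (c : R) (M : Matrix n n R) :
    (c • M).charpoly.comp (C c * X) = C c ^ Fintype.card n * M.charpoly := by
  rw [Matrix.charpoly, Matrix.charpoly, ← coe_compRingHom_apply, RingHom.map_det]
  have hcharmatrix : (compRingHom (C c * X)).mapMatrix (Matrix.charmatrix (c • M)) =
      C c • Matrix.charmatrix M := by
    ext i j
    rcases eq_or_ne i j with rfl | h
    · simp [Matrix.charmatrix_apply_eq, mul_sub, C_mul]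
    · simp [Matrix.charmatrix_apply_ne _ _ _ h, C_mul]
  rw [hcharmatrix, Matrix.det_smul]

theorem LinearMap.charpoly_smul_comp {R M : Type*} [CommRing R] [Nontrivial R] [AddCommGroup M]
    [Module R M] [Module.Free R M] [Module.Finite R M] (c : R) (φ : Module.End R M) :
    (c • φ).charpoly.comp (C c * X) = C c ^ finrank R M * φ.charpoly := by
  let b := Free.chooseBasis R M
  rw [← charpoly_toMatrix φ b, ← charpoly_toMatrix (c • φ) b, map_smul,
    Matrix.charpoly_smul_comp, finrank_eq_card_chooseBasisIndex]

namespace Module.End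

variable {K X : Type*} [Field K] [AddCommGroup X] [Module K X]

/-- Prescribing `H` on a subspace `W` meeting `ker (A ^ n)` trivially is what makes the induction
run: one recurses on `A` restricted to `ker (A ^ n)`, prescribing `H` on the image under `A` of a
complement of that kernel containing `W`. -/
theorem exists_similarity_smul_of_pow_succ_eq_zero {α : K} (hα : α ≠ 0) (n : ℕ)
    (A : Module.End K X) (hA : A ^ (n + 1) = 0) (W : Submodule K X)
    (hW : Disjoint W (ker (A ^ n))) {c : K} (hc : c ≠ 0) :
    ∃ H : X ≃ₗ[K] X, (∀ x, H (A x) = α • A (H x)) ∧ ∀ w ∈ W, H w = c • w := by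
  induction n generalizing X c with
  | zero =>
    have hA0 : A = 0 := by simpa using hA
    exact ⟨.smulOfNeZero K X c hc, by simp [hA0], fun w _ => rfl⟩
  | succ n ih =>
    set N := ker (A ^ (n + 1))
    have hAN : ∀ x, A x ∈ N := fun x => by
      rw [mem_ker, ← mul_apply, ← pow_succ, hA, LinearMap.zero_apply]
    obtain ⟨W', hWW', hcompl⟩ := hW.exists_isCompl
    set B := A.restrict fun x _ => hAN x
    have hBpow : ∀ m, ∀ k : N, ((B ^ m) k : X) = (A ^ m) k := fun m k => by
      rw [pow_restrict, restrict_apply]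
    have hB : B ^ (n + 1) = 0 := by
      ext k
      rw [hBpow]
      exact k.2
    set g := A.codRestrict N hAN
    have hAW' : Disjoint (W'.map g) (ker (B ^ n)) := by
      rw [Submodule.disjoint_def]
      rintro _ ⟨w, hw, rfl⟩ hker
      have hwN : w ∈ N := by
        have h := congrArg Subtype.val hker
        rw [hBpow] at h
        rw [mem_ker, pow_succ, mul_apply]
        exact h
      simp [Submodule.disjoint_def.mp hcompl.disjoint w hw hwN]
    obtain ⟨HN, hHN, hHNW⟩ := ih B hB (W'.map g) hAW' (mul_ne_zero hα hc)
    refine ⟨.ofIsCompl hcompl.symm HN (.smulOfNeZero K W' c hc), fun x => ?_, fun w hw => ?_⟩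
    · obtain ⟨k, w, rfl, -⟩ := Submodule.existsUnique_add_of_isCompl hcompl.symm x
      have hk : A k = (B k : X) := rfl
      have hw : A w = (g w : X) := rfl
      simp only [map_add, hk, hw, LinearEquiv.ofIsCompl_apply_left, hHN,
        hHNW _ ⟨w, w.2, rfl⟩, LinearEquiv.ofIsCompl_apply_right, LinearEquiv.smulOfNeZero_apply,
        SetLike.val_smul, map_smul, mul_smul, smul_add]
      rfl
    · exact LinearEquiv.ofIsCompl_apply_right hcompl.symm HN _ ⟨w, hWW' hw⟩

theorem _root_.IsNilpotent.exists_conj_eq_smul {A : Module.End K X} (hA : IsNilpotent A) {α : K}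
    (hα : α ≠ 0) : ∃ H : X ≃ₗ[K] X, H.conj A = α • A := by
  obtain ⟨n, hn⟩ := hA
  obtain ⟨H, hH, -⟩ := exists_similarity_smul_of_pow_succ_eq_zero hα n A
    (by rw [pow_succ, hn, zero_mul]) ⊥ disjoint_bot_left one_ne_zero
  exact ⟨H, (H.conj_eq_iff_apply_eq A _).mpr hH⟩

theorem isNilpotent_of_charpoly_smul_eq [LinearOrder K] [IsStrictOrderedRing K]
    [FiniteDimensional K X] {α : K} (hα : 1 < α) (A : Module.End K X)
    (h : (α • A).charpoly = A.charpoly) : IsNilpotent A := by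
  have hcomp := A.charpoly_smul_comp α
  rw [h] at hcomp
  have hcoeff : ∀ k < finrank K X, A.charpoly.coeff k = 0 := fun k hk => by
    have hk' := congrArg (coeff · k) hcomp
    simp only [comp_C_mul_X_coeff, ← C_pow, coeff_C_mul] at hk'
    by_contra hne
    exact (pow_lt_pow_right₀ hα hk).ne (mul_left_cancel₀ hne (by rw [hk', mul_comm]))
  rw [LinearMap.isNilpotent_iff_charpoly, ← A.charpoly_natDegree,
    A.charpoly_monic.eq_X_pow_iff_natTrailingDegree_eq_natDegree]
  refine le_antisymm (natTrailingDegree_le_natDegree _)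
    (le_natTrailingDegree A.charpoly_monic.ne_zero ?_)
  rwa [A.charpoly_natDegree]

theorem isNilpotent_of_conj_eq_smul [LinearOrder K] [IsStrictOrderedRing K]
    [FiniteDimensional K X] {α : K} (hα : 1 < α) {A : Module.End K X} (H : X ≃ₗ[K] X)
    (hH : H.conj A = α • A) : IsNilpotent A :=
  isNilpotent_of_charpoly_smul_eq hα A (by rw [← hH, H.charpoly_conj])

end Module.End

/-- For a linear operator `A` on a finite-dimensional real vector space,
the following are equivalent: (i) `A` is nilpotent; (ii) `A` and `α • A` are similar
for every `α ≠ 0`; (iii) `A` and `α • A` are similar for some `α > 1`. -/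
theorem stmt1 {X : Type*} [AddCommGroup X] [Module ℝ X] [FiniteDimensional ℝ X]
    (A : X →ₗ[ℝ] X) :
    ((IsNilpotent A ↔
        ∀ α : ℝ, α ≠ 0 → ∃ H : X ≃ₗ[ℝ] X, ∀ x, H (A x) = (α • A) (H x)) ∧
      (IsNilpotent A ↔
        ∃ α : ℝ, 1 < α ∧ ∃ H : X ≃ₗ[ℝ] X, ∀ x, H (A x) = (α • A) (H x))) := by
  simp only [← LinearEquiv.conj_eq_iff_apply_eq]
  have hnil : ∀ α : ℝ, 1 < α → (∃ H : X ≃ₗ[ℝ] X, H.conj A = α • A) → IsNilpotent A :=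
    fun α hα ⟨H, hH⟩ => Module.End.isNilpotent_of_conj_eq_smul hα H hH
  refine ⟨⟨fun hA α hα => hA.exists_conj_eq_smul hα,
      fun h => hnil 2 one_lt_two (h 2 two_ne_zero)⟩,
    ⟨fun hA => ⟨2, one_lt_two, hA.exists_conj_eq_smul two_ne_zero⟩,
      fun ⟨α, hα, h⟩ => hnil α hα h⟩⟩
end

section
/- For every m ∈ ℕ and every norm ‖·‖ on ℝ^m there exists ν > 0 such that ‖exp(t J_m) x‖ ≥ ν ‖x‖ / √(1 + t^{2m−2}) for all t ∈ ℝ and all x ∈ ℝ^m, where J_m is the m×m nilpotent Jordan block. -/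
open scoped Matrix

section Stmt2Aux

variable {m : ℕ}

private noncomputable def Jm (m : ℕ) : Matrix (Fin m) (Fin m) ℝ :=
  Matrix.of fun i j : Fin m => if (i : ℕ) + 1 = (j : ℕ) then (1 : ℝ) else 0

private lemma Jm_pow_apply (k : ℕ) (i j : Fin m) :
    (Jm m ^ k) i j = if (i : ℕ) + k = (j : ℕ) then (1 : ℝ) else 0 := by
  induction k generalizing j with
  | zero => simp [Matrix.one_apply, Fin.ext_iff, eq_comm]
  | succ k ih =>
    rw [pow_succ, Matrix.mul_apply]
    by_cases h : (i : ℕ) + k < m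
    · have hterm : ∀ l : Fin m, (Jm m ^ k) i l * Jm m l j =
          if l = ⟨(i : ℕ) + k, h⟩ then Jm m ⟨(i : ℕ) + k, h⟩ j else 0 := by
        intro l
        rw [ih]
        by_cases hl : l = ⟨(i : ℕ) + k, h⟩
        · subst hl; simp
        · have hne : ¬((i : ℕ) + k = (l : ℕ)) := by
            intro hc; exact hl (Fin.ext hc.symm)
          simp [hne, hl]
      rw [Finset.sum_congr rfl fun l _ => hterm l, Finset.sum_ite_eq']
      simp only [Finset.mem_univ, if_true, Jm, Matrix.of_apply]
      norm_num [add_assoc]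
    · have h1 : ∀ l : Fin m, (Jm m ^ k) i l * Jm m l j = 0 := by
        intro l
        rw [ih]
        have hlt := l.isLt
        have hne : ¬((i : ℕ) + k = (l : ℕ)) := by omega
        simp [hne]
      have h2 : ¬((i : ℕ) + (k + 1) = (j : ℕ)) := by
        have := j.isLt; omega
      simp [h1, h2]

private lemma Jm_pow_eq_zero {n : ℕ} (hn : m ≤ n) : (Jm m ^ n) = 0 := by
  ext i j
  rw [Jm_pow_apply]
  have := j.isLt
  have : ¬((i : ℕ) + n = (j : ℕ)) := by omega
  simp [this]

private lemma Jm_pow_mulVec_norm_le (k : ℕ) (z : Fin m → ℝ) :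
    ‖(Jm m ^ k).mulVec z‖ ≤ ‖z‖ := by
  rw [pi_norm_le_iff_of_nonneg (norm_nonneg z)]
  intro i
  rw [Matrix.mulVec, dotProduct]
  have hterm : ∀ j : Fin m, (Jm m ^ k) i j * z j =
      if h : (i : ℕ) + k < m then
        (if j = ⟨(i : ℕ) + k, h⟩ then z j else 0) else 0 := by
    intro j
    rw [Jm_pow_apply]
    by_cases h : (i : ℕ) + k < m
    · by_cases hj : j = ⟨(i : ℕ) + k, h⟩
      · subst hj; simp [h]
      · have hne : ¬((i : ℕ) + k = (j : ℕ)) := by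
          intro hc; exact hj (Fin.ext hc.symm)
        simp [hne, hj, h]
    · have hlt := j.isLt
      have hne : ¬((i : ℕ) + k = (j : ℕ)) := by omega
      simp [hne, h]
  rw [Finset.sum_congr rfl fun j _ => hterm j]
  by_cases h : (i : ℕ) + k < m
  · simp only [h, dif_pos]
    rw [Finset.sum_ite_eq' Finset.univ (⟨(i : ℕ) + k, h⟩ : Fin m)]
    simp only [Finset.mem_univ, if_true]
    exact norm_le_pi_norm z _
  · simp only [h, dif_neg, not_false_iff, Finset.sum_const_zero, norm_zero]
    exact norm_nonneg z

private lemma exp_smul_Jm (t : ℝ) :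
    NormedSpace.exp (t • Jm m) =
      ∑ k ∈ Finset.range m, (t ^ k / (k.factorial : ℝ)) • (Jm m ^ k) := by
  rw [NormedSpace.exp_eq_tsum ℝ]
  beta_reduce
  rw [tsum_eq_sum (s := Finset.range m) ?_]
  · refine Finset.sum_congr rfl fun k _ => ?_
    rw [smul_pow, smul_smul]
    congr 1
    rw [div_eq_mul_inv, mul_comm]
  · intro n hn
    have hn' : m ≤ n := by simpa using hn
    rw [smul_pow, Jm_pow_eq_zero hn', smul_zero, smul_zero]

private lemma exp_neg_mul_exp (t : ℝ) :
    NormedSpace.exp ((-t) • Jm m) * NormedSpace.exp (t • Jm m) = 1 := by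
  rw [← Matrix.exp_add_of_commute]
  · rw [← add_smul, neg_add_cancel, zero_smul, NormedSpace.exp_zero]
  · exact ((Commute.refl (Jm m)).smul_left (-t)).smul_right t

private lemma sum_mulVec' {ι : Type*} (s : Finset ι) (A : ι → Matrix (Fin m) (Fin m) ℝ)
    (z : Fin m → ℝ) : (∑ k ∈ s, A k).mulVec z = ∑ k ∈ s, (A k).mulVec z := by
  classical
  induction s using Finset.cons_induction with
  | empty => simp [Matrix.zero_mulVec]
  | cons a s ha ih => rw [Finset.sum_cons, Finset.sum_cons, Matrix.add_mulVec, ih]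

end Stmt2Aux

/-- Norm equivalence: any norm on `Fin m → ℝ` is equivalent to the sup norm. -/
private lemma norm_equiv (m : ℕ) (hm : 0 < m)
    (nrm : (Fin m → ℝ) → ℝ)
    (h_add : ∀ x y, nrm (x + y) ≤ nrm x + nrm y)
    (h_smul : ∀ (a : ℝ) x, nrm (a • x) = |a| * nrm x)
    (h_eq : ∀ x, nrm x = 0 ↔ x = 0) :
    ∃ c1 c2 : ℝ, 0 < c1 ∧ 0 < c2 ∧ ∀ x, c1 * ‖x‖ ≤ nrm x ∧ nrm x ≤ c2 * ‖x‖ := by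
  classical
  have nrm0 : nrm 0 = 0 := by
    have := h_smul 0 0
    simpa using this
  have nrm_neg : ∀ x, nrm (-x) = nrm x := by
    intro x
    have := h_smul (-1) x
    simpa using this
  have nrm_nonneg : ∀ x, 0 ≤ nrm x := by
    intro x
    have h0 : nrm (x + (-x)) ≤ nrm x + nrm (-x) := h_add x (-x)
    rw [add_neg_cancel, nrm0, nrm_neg] at h0
    linarith
  have sum_le : ∀ {ι : Type} (s : Finset ι) (f : ι → (Fin m → ℝ)),
      nrm (∑ i ∈ s, f i) ≤ ∑ i ∈ s, nrm (f i) := by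
    intro ι s f
    induction s using Finset.cons_induction with
    | empty => simp [nrm0]
    | cons a s ha ih =>
      rw [Finset.sum_cons, Finset.sum_cons]
      exact (h_add _ _).trans (add_le_add le_rfl ih)
  -- upper bound
  set C : ℝ := ∑ i : Fin m, nrm (fun j => if i = j then 1 else 0) with hC
  have hCnonneg : 0 ≤ C := Finset.sum_nonneg fun i _ => nrm_nonneg _
  have upper : ∀ x, nrm x ≤ (C + 1) * ‖x‖ := by
    intro x
    have hx : x = ∑ i : Fin m, x i • fun j => if i = j then (1 : ℝ) else 0 :=
      pi_eq_sum_univ x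
    calc nrm x = nrm (∑ i : Fin m, x i • fun j => if i = j then (1 : ℝ) else 0) :=
          congrArg nrm hx
      _ ≤ ∑ i : Fin m, nrm (x i • fun j => if i = j then (1 : ℝ) else 0) := sum_le _ _
      _ = ∑ i : Fin m, |x i| * nrm (fun j => if i = j then (1 : ℝ) else 0) := by
          refine Finset.sum_congr rfl fun i _ => h_smul _ _
      _ ≤ ∑ i : Fin m, ‖x‖ * nrm (fun j => if i = j then (1 : ℝ) else 0) := by
          refine Finset.sum_le_sum fun i _ => ?_
          have : |x i| ≤ ‖x‖ := by
            have := norm_le_pi_norm x i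
            simpa [Real.norm_eq_abs] using this
          exact mul_le_mul_of_nonneg_right this (nrm_nonneg _)
      _ = C * ‖x‖ := by rw [← Finset.mul_sum, mul_comm]
      _ ≤ (C + 1) * ‖x‖ := by
          have := norm_nonneg x
          nlinarith
  have hC1 : (0 : ℝ) < C + 1 := by linarith
  -- continuity of nrm
  have hlip : ∀ x y, |nrm x - nrm y| ≤ (C + 1) * ‖x - y‖ := by
    intro x y
    rw [abs_sub_le_iff]
    constructor
    · have h1 : nrm x ≤ nrm y + nrm (x - y) := by
        have := h_add y (x - y)
        simpa using this
      have := upper (x - y)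
      linarith
    · have h1 : nrm y ≤ nrm x + nrm (y - x) := by
        have := h_add x (y - x)
        simpa using this
      have h2 : nrm (y - x) = nrm (x - y) := by
        rw [← nrm_neg (y - x), neg_sub]
      have := upper (x - y)
      linarith
  have hcont : Continuous nrm := by
    refine (LipschitzWith.of_dist_le_mul (K := (C + 1).toNNReal) fun x y => ?_).continuous
    rw [Real.dist_eq, dist_eq_norm, Real.coe_toNNReal _ hC1.le]
    exact hlip x y
  -- min on sphere
  haveI : Nonempty (Fin m) := ⟨⟨0, hm⟩⟩
  have hsne : (Metric.sphere (0 : Fin m → ℝ) 1).Nonempty :=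
    NormedSpace.sphere_nonempty.mpr zero_le_one
  obtain ⟨u, hu, humin⟩ :=
    (isCompact_sphere (0 : Fin m → ℝ) 1).exists_isMinOn hsne hcont.continuousOn
  have hu_norm : ‖u‖ = 1 := by simpa using mem_sphere_zero_iff_norm.mp hu
  have hu_ne : u ≠ 0 := by
    intro h; rw [h, norm_zero] at hu_norm
    exact one_ne_zero hu_norm.symm
  have hc1 : 0 < nrm u := by
    rcases lt_or_eq_of_le (nrm_nonneg u) with h | h
    · exact h
    · exact absurd ((h_eq u).mp h.symm) hu_ne
  refine ⟨nrm u, C + 1, hc1, hC1, fun x => ⟨?_, upper x⟩⟩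
  by_cases hx : x = 0
  · simp [hx, nrm0]
  · have hxn : 0 < ‖x‖ := norm_pos_iff.mpr hx
    set u' : Fin m → ℝ := ‖x‖⁻¹ • x with hu'
    have hu'mem : u' ∈ Metric.sphere (0 : Fin m → ℝ) 1 := by
      rw [mem_sphere_zero_iff_norm, hu', norm_smul, norm_inv, norm_norm,
        inv_mul_cancel₀ hxn.ne']
    have h1 : nrm u ≤ nrm u' := humin hu'mem
    have hxu : x = ‖x‖ • u' := by
      rw [hu', smul_smul, mul_inv_cancel₀ hxn.ne', one_smul]
    have h2 : nrm x = ‖x‖ * nrm u' := by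
      rw [congrArg nrm hxu, h_smul, abs_of_pos hxn]
    rw [h2, mul_comm (nrm u) ‖x‖]
    exact mul_le_mul_of_nonneg_left h1 hxn.le

/-- For every `m ∈ ℕ` and every norm on `ℝ^m` there is `ν > 0` with
`‖exp(t J_m) x‖ ≥ ν ‖x‖ / √(1 + t^(2m-2))` for all `t ∈ ℝ`, `x ∈ ℝ^m`, where `J_m`
is the nilpotent single Jordan block. -/
theorem stmt2 (m : ℕ) (hm : 0 < m)
    (nrm : (Fin m → ℝ) → ℝ)
    (h_add : ∀ x y, nrm (x + y) ≤ nrm x + nrm y)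
    (h_smul : ∀ (a : ℝ) x, nrm (a • x) = |a| * nrm x)
    (h_eq : ∀ x, nrm x = 0 ↔ x = 0) :
    ∃ ν : ℝ, 0 < ν ∧ ∀ (t : ℝ) (x : Fin m → ℝ),
      nrm ((NormedSpace.exp
          (t • (Matrix.of fun i j : Fin m => if (i : ℕ) + 1 = (j : ℕ) then (1 : ℝ) else 0))).mulVec x)
        ≥ ν * nrm x / Real.sqrt (1 + t ^ (2 * m - 2)) := by
  classical
  obtain ⟨c1, c2, hc1, hc2, hcc⟩ := norm_equiv m hm nrm h_add h_smul h_eq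
  have nrm0 : nrm 0 = 0 := by have := h_smul 0 0; simpa using this
  have nrm_nonneg : ∀ x, 0 ≤ nrm x := fun x =>
    le_trans (by positivity) (hcc x).1
  have sum_le : ∀ {ι : Type} (s : Finset ι) (f : ι → (Fin m → ℝ)),
      nrm (∑ i ∈ s, f i) ≤ ∑ i ∈ s, nrm (f i) := by
    intro ι s f
    induction s using Finset.cons_induction with
    | empty => simp [nrm0]
    | cons a s ha ih =>
      rw [Finset.sum_cons, Finset.sum_cons]
      exact (h_add _ _).trans (add_le_add le_rfl ih)
  have hmR : (0 : ℝ) < m := Nat.cast_pos.mpr hm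
  refine ⟨c1 / (c2 * m), by positivity, fun t x => ?_⟩
  set z := (NormedSpace.exp (t • Jm m)).mulVec x with hz
  show nrm z ≥ c1 / (c2 * m) * nrm x / Real.sqrt (1 + t ^ (2 * m - 2))
  -- positivity of the sqrt expression
  have hpow : (0 : ℝ) ≤ t ^ (2 * m - 2) := by
    have h2 : 2 * m - 2 = (m - 1) * 2 := by omega
    rw [h2, pow_mul]
    positivity
  have hS : 0 < Real.sqrt (1 + t ^ (2 * m - 2)) := Real.sqrt_pos.mpr (by linarith)
  set S := Real.sqrt (1 + t ^ (2 * m - 2)) with hSdef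
  -- x = exp(-t J) z
  have hx : (NormedSpace.exp ((-t) • Jm m)).mulVec z = x := by
    rw [hz, Matrix.mulVec_mulVec, exp_neg_mul_exp, Matrix.one_mulVec]
  -- bound nrm x
  set M : ℝ := max 1 |t| ^ (m - 1) with hM
  have hM1 : (1 : ℝ) ≤ max 1 |t| := le_max_left _ _
  have hMpos : (0 : ℝ) < M := by positivity
  have hterm : ∀ k ∈ Finset.range m,
      nrm (((-t) ^ k / (k.factorial : ℝ)) • (Jm m ^ k).mulVec z)
        ≤ M * (c2 / c1 * nrm z) := by
    intro k hk
    rw [h_smul]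
    have habs : |(-t) ^ k / (k.factorial : ℝ)| ≤ M := by
      rw [abs_div, abs_pow, abs_neg]
      have h1 : |t| ^ k ≤ M := by
        rw [hM]
        calc |t| ^ k ≤ max 1 |t| ^ k :=
              pow_le_pow_left₀ (abs_nonneg t) (le_max_right _ _) k
          _ ≤ max 1 |t| ^ (m - 1) := by
              refine pow_le_pow_right₀ hM1 ?_
              have := Finset.mem_range.mp hk; omega
      have h2 : (1 : ℝ) ≤ |(k.factorial : ℝ)| := by
        rw [abs_of_pos (by positivity)]
        exact_mod_cast k.factorial_pos
      calc |t| ^ k / |(k.factorial : ℝ)| ≤ |t| ^ k / 1 := by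
            apply div_le_div_of_nonneg_left (by positivity) one_pos h2
        _ = |t| ^ k := div_one _
        _ ≤ M := h1
    have hnz : nrm ((Jm m ^ k).mulVec z) ≤ c2 / c1 * nrm z := by
      calc nrm ((Jm m ^ k).mulVec z) ≤ c2 * ‖(Jm m ^ k).mulVec z‖ := (hcc _).2
        _ ≤ c2 * ‖z‖ := mul_le_mul_of_nonneg_left (Jm_pow_mulVec_norm_le k z) hc2.le
        _ ≤ c2 / c1 * nrm z := by
            rw [div_mul_eq_mul_div, le_div_iff₀ hc1, mul_comm (c2 * ‖z‖) c1,
              ← mul_assoc, mul_comm c1 c2, mul_assoc]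
            exact mul_le_mul_of_nonneg_left (hcc z).1 hc2.le
    exact mul_le_mul habs hnz (nrm_nonneg _) hMpos.le
  have hxbound : nrm x ≤ m * M * (c2 / c1 * nrm z) := by
    calc nrm x = nrm ((NormedSpace.exp ((-t) • Jm m)).mulVec z) := by rw [hx]
      _ = nrm (∑ k ∈ Finset.range m, ((-t) ^ k / (k.factorial : ℝ)) • (Jm m ^ k).mulVec z) := by
          rw [exp_smul_Jm, sum_mulVec']
          congr 1
          refine Finset.sum_congr rfl fun k _ => ?_
          rw [Matrix.smul_mulVec]
      _ ≤ ∑ k ∈ Finset.range m, nrm (((-t) ^ k / (k.factorial : ℝ)) • (Jm m ^ k).mulVec z) :=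
          sum_le _ _
      _ ≤ ∑ k ∈ Finset.range m, M * (c2 / c1 * nrm z) := Finset.sum_le_sum hterm
      _ = m * M * (c2 / c1 * nrm z) := by
          simp only [Finset.sum_const, Finset.card_range, nsmul_eq_mul]
          ring
  -- M ≤ S
  have hMS : M ≤ S := by
    rw [hSdef]
    rw [Real.le_sqrt hMpos.le]
    have hMsq : M ^ 2 = max 1 |t| ^ (2 * m - 2) := by
      rw [hM, ← pow_mul]
      congr 1
      omega
    rw [hMsq]
    rcases le_total |t| 1 with h | h
    · rw [max_eq_left h]
      simp only [one_pow]
      linarith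
    · rw [max_eq_right h]
      have : |t| ^ (2 * m - 2) = t ^ (2 * m - 2) := by
        rw [← abs_pow, abs_of_nonneg hpow]
      rw [this]
      linarith
    linarith
  -- conclude
  rw [ge_iff_le, div_le_iff₀ hS]
  have key : nrm x ≤ m * S * (c2 / c1 * nrm z) := by
    calc nrm x ≤ m * M * (c2 / c1 * nrm z) := hxbound
      _ ≤ m * S * (c2 / c1 * nrm z) := by
          have hX : (0:ℝ) ≤ c2 / c1 * nrm z := by
            have := nrm_nonneg z; positivity
          exact mul_le_mul_of_nonneg_right (mul_le_mul_of_nonneg_left hMS hmR.le) hX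
  have h1 : c1 / (c2 * m) * nrm x ≤ c1 / (c2 * m) * (m * S * (c2 / c1 * nrm z)) :=
    mul_le_mul_of_nonneg_left key (by positivity)
  have h2 : c1 / (c2 * m) * (m * S * (c2 / c1 * nrm z)) = nrm z * S := by
    field_simp
  linarith [h1, h2.symm.le]
end

section
/- For every m ∈ ℕ and ω ∈ ℂ, the determinant of the m×m matrix Δ with entries Δ_{i,j} = 1/Γ(ω + j − i + 1) (indices 1 ≤ i,j ≤ m) equals ∏_{j=1}^m Γ(j)/Γ(ω + j). In particular Δ is invertible unless ω is a negative integer. -/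
/-!
Writing `1/Γ(ω + j + 1 - i) = (ω + j)(ω + j - 1)⋯(ω + j - i + 1) / Γ(ω + j + 1)`, the factor
`1/Γ(ω + j + 1)` comes out of column `j`, and what remains is the matrix of the monic
polynomials `descPochhammer i` (of degree `i`) evaluated at the nodes `ω + j`. Its determinant is
the Vandermonde determinant of these nodes, `∏_{i<j} (j - i) = ∏_{j<m} j!`, and `j! = Γ(j + 1)`.
-/

open Polynomial Matrix Finset Nat

namespace Complex

theorem inv_Gamma_eq_mul_inv_Gamma_add_one (w : ℂ) :
    (Gamma w)⁻¹ = w * (Gamma (w + 1))⁻¹ := by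
  rcases eq_or_ne w 0 with rfl | hw
  · simp [Gamma_zero]
  · rw [Gamma_add_one w hw, mul_inv, ← mul_assoc, mul_inv_cancel₀ hw, one_mul]

theorem inv_Gamma_add_one_sub_natCast (z : ℂ) (k : ℕ) :
    (Gamma (z + 1 - k))⁻¹ = (descPochhammer ℂ k).eval z * (Gamma (z + 1))⁻¹ := by
  induction k with
  | zero => simp
  | succ k ih =>
    have hshift : z + 1 - ((k + 1 : ℕ) : ℂ) + 1 = z + 1 - k := by push_cast; ring
    rw [inv_Gamma_eq_mul_inv_Gamma_add_one, hshift, ih, descPochhammer_succ_eval]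
    push_cast
    ring

end Complex

namespace Matrix

variable {R : Type*} [CommRing R]

theorem det_of_eval_descPochhammer [IsDomain R] {n : ℕ} (v : Fin n → R) :
    (of fun i j : Fin n => (descPochhammer R i).eval (v j)).det = (vandermonde v).det := by
  rw [det_eval_matrixOfPolynomials_eq_det_vandermonde v (fun i => descPochhammer R i)
    (fun i => descPochhammer_natDegree R i) (fun i => monic_descPochhammer R i), ← det_transpose]
  rfl

theorem det_vandermonde_add_natCast (a : R) (n : ℕ) :
    (vandermonde fun i : Fin n => a + i).det = ∏ j ∈ range n, (j ! : R) := by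
  cases n with
  | zero => simp
  | succ n =>
    simp_rw [add_comm a, det_vandermonde_add, det_vandermonde_id_eq_superFactorial,
      ← prod_range_succ_factorial, Nat.cast_prod]

end Matrix

theorem det_of_inv_Gamma_sub (m : ℕ) (ω : ℂ) :
    (of fun i j : Fin m => (Complex.Gamma (ω + (j : ℕ) - (i : ℕ) + 1))⁻¹).det
      = ∏ j ∈ range m, Complex.Gamma ((j : ℂ) + 1) / Complex.Gamma (ω + (j : ℕ) + 1) := by
  set A : Matrix (Fin m) (Fin m) ℂ := of fun i j => (descPochhammer ℂ i).eval (ω + (j : ℕ))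
  have hentry : (of fun i j : Fin m => (Complex.Gamma (ω + (j : ℕ) - (i : ℕ) + 1))⁻¹)
      = of fun i j : Fin m => (Complex.Gamma (ω + (j : ℕ) + 1))⁻¹ * A i j := by
    ext i j
    rw [of_apply, of_apply, sub_add_eq_add_sub, Complex.inv_Gamma_add_one_sub_natCast, mul_comm]
    rfl
  rw [hentry, det_mul_row, det_of_eval_descPochhammer, det_vandermonde_add_natCast,
    Fin.prod_univ_eq_prod_range (fun j => (Complex.Gamma (ω + (j : ℕ) + 1))⁻¹), mul_comm,
    ← prod_mul_distrib]
  simp only [Complex.Gamma_nat_eq_factorial, div_eq_mul_inv]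

/-- For `m ∈ ℕ` and `ω ∈ ℂ`, the determinant of the `m × m` matrix with
entries `1/Γ(ω + j - i + 1)` (1-indexed; here zero-indexed via `i, j : Fin m`) equals
`∏_{j=1}^m Γ(j)/Γ(ω + j)`; in particular it is invertible unless `ω` is a negative
integer. (Here `1/Γ` is the entire reciprocal Gamma function, vanishing at the poles.) -/
theorem stmt3 (m : ℕ) (ω : ℂ) :
    (Matrix.of fun i j : Fin m =>
        (Complex.Gamma (ω + (j : ℕ) - (i : ℕ) + 1))⁻¹).det
      = ∏ j ∈ Finset.range m, Complex.Gamma ((j : ℂ) + 1) / Complex.Gamma (ω + (j : ℕ) + 1) ∧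
    ((∀ n : ℕ, ω ≠ -((n : ℂ) + 1)) →
      IsUnit (Matrix.of fun i j : Fin m =>
        (Complex.Gamma (ω + (j : ℕ) - (i : ℕ) + 1))⁻¹).det) := by
  refine ⟨det_of_inv_Gamma_sub m ω, fun hω => ?_⟩
  rw [det_of_inv_Gamma_sub, isUnit_iff_ne_zero, prod_ne_zero_iff]
  intro j _
  refine div_ne_zero ?_ (Complex.Gamma_ne_zero fun n hn => hω (n + j) ?_)
  · rw [Complex.Gamma_nat_eq_factorial]
    exact_mod_cast factorial_ne_zero j
  · push_cast
    linear_combination hn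
end

section
/- Let φ be a flow on a finite-dimensional normed real vector space X and x ∈ X. Then x is a fixed point of φ if and only if for every ε > 0 there exists x̃ ∈ X such that ‖φ(t, x̃) − x‖ < ε for all 0 ≤ t ≤ 1/ε. -/
/-! The points `x̃` supplied for smaller and smaller `ε` converge to `x`, while their images under
`φ t` (for fixed `t ≥ 0`) also converge to `x`; continuity of `φ t` then forces `φ t x = x`.
Negative times follow from the group law. -/

open Function

theorem ContinuousAt.isFixedPt_of_forall_exists_dist_lt {α : Type*} [MetricSpace α]
    {f : α → α} {x : α} (hf : ContinuousAt f x)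
    (h : ∀ ε > 0, ∃ y, dist y x < ε ∧ dist (f y) x < ε) : IsFixedPt f x := by
  refine eq_of_forall_dist_le fun ε hε => ?_
  obtain ⟨δ, hδ, hfδ⟩ := Metric.continuousAt_iff.mp hf (ε / 2) (half_pos hε)
  obtain ⟨y, hyx, hfyx⟩ := h (min δ (ε / 2)) (lt_min hδ (half_pos hε))
  calc dist (f x) x ≤ dist (f x) (f y) + dist (f y) x := dist_triangle _ _ _
    _ ≤ ε / 2 + ε / 2 := by
      gcongr
      · rw [dist_comm]; exact (hfδ (hyx.trans_le (min_le_left _ _))).le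
      · exact (hfyx.trans_le (min_le_right _ _)).le
    _ = ε := add_halves ε

theorem apply_eq_self_of_forall_nonneg {α : Type*} {φ : ℝ → α → α}
    (hzero : ∀ x, φ 0 x = x) (hgroup : ∀ t s x, φ t (φ s x) = φ (t + s) x) {x : α}
    (h : ∀ t, 0 ≤ t → φ t x = x) (t : ℝ) : φ t x = x := by
  rcases le_or_gt 0 t with ht | ht
  · exact h t ht
  · calc φ t x = φ t (φ (-t) x) := by rw [h (-t) (by linarith)]
      _ = x := by rw [hgroup, add_neg_cancel, hzero]

theorem stmt4_general {X : Type*} [NormedAddCommGroup X]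
    (φ : ℝ → X → X)
    (hcont : Continuous fun p : ℝ × X => φ p.1 p.2)
    (hzero : ∀ x, φ 0 x = x)
    (hgroup : ∀ t s x, φ t (φ s x) = φ (t + s) x)
    (x : X) :
    (∀ t : ℝ, φ t x = x) ↔
      (∀ ε : ℝ, 0 < ε → ∃ x' : X, ∀ t : ℝ, 0 ≤ t → t ≤ ε⁻¹ → ‖φ t x' - x‖ < ε) := by
  refine ⟨fun hfix ε hε => ⟨x, fun t _ _ => by simpa [hfix t] using hε⟩, fun h => ?_⟩
  refine apply_eq_self_of_forall_nonneg hzero hgroup fun t ht => ?_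
  have hφt : ContinuousAt (φ t) x := (hcont.comp (Continuous.prodMk_right t)).continuousAt
  refine hφt.isFixedPt_of_forall_exists_dist_lt fun ε hε => ?_
  set η := min ε (t + 1)⁻¹
  have hη : 0 < η := lt_min hε (by positivity)
  have htη : t ≤ η⁻¹ := by
    calc t ≤ t + 1 := by linarith
      _ ≤ η⁻¹ := by rw [le_inv_comm₀ (by positivity) hη]; exact min_le_right _ _
  obtain ⟨y, hy⟩ := h η hη
  have hy0 := hy 0 le_rfl (inv_pos.mpr hη).le
  rw [hzero] at hy0
  simp only [dist_eq_norm]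
  exact ⟨y, hy0.trans_le (min_le_left _ _), (hy t ht htη).trans_le (min_le_left _ _)⟩

/-- Let `φ` be a flow on a finite-dimensional normed real space `X` and
`x ∈ X`. Then `x` is a fixed point of `φ` iff for every `ε > 0` there is `x̃` with
`‖φ(t, x̃) - x‖ < ε` for all `0 ≤ t ≤ 1/ε`. -/
theorem stmt4 {X : Type*} [NormedAddCommGroup X] [NormedSpace ℝ X] [FiniteDimensional ℝ X]
    (φ : ℝ → X → X)
    (hcont : Continuous fun p : ℝ × X => φ p.1 p.2)
    (hzero : ∀ x, φ 0 x = x)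
    (hgroup : ∀ t s x, φ t (φ s x) = φ (t + s) x)
    (x : X) :
    (∀ t : ℝ, φ t x = x) ↔
      (∀ ε : ℝ, 0 < ε → ∃ x' : X, ∀ t : ℝ, 0 ≤ t → t ≤ ε⁻¹ → ‖φ t x' - x‖ < ε) :=
  stmt4_general φ hcont hzero hgroup x
end

section
/- Let φ, ψ be flows and suppose φ is (h,τ)-related to ψ. Then for every periodic point x of φ, the minimal ψ-period of h(x) equals τ(T, x) where T is the minimal φ-period of x. -/
/-!
The relation `h ∘ φ t = ψ (τ t) ∘ h` along the orbit of `x`, with `h` injective, says that `t`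
is a period of `x` exactly when `τ t` is a period of `h x`. Since `τ(·, x)` is an order
automorphism of `ℝ` fixing `0`, the positive periods of `h x` are the image of those of `x`,
and an order automorphism commutes with `sInf`.
-/

open Function

def positivePeriods {α : Type*} (φ : ℝ → α → α) (x : α) : Set ℝ :=
  {t | 0 < t ∧ φ t x = x}

theorem bddBelow_positivePeriods {α : Type*} (φ : ℝ → α → α) (x : α) :
    BddBelow (positivePeriods φ x) :=
  ⟨0, fun _ ht => ht.1.le⟩

theorem positivePeriods_eq_image {α β : Type*} {φ : ℝ → α → α} {ψ : ℝ → β → β} {h : α → β}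
    (hinj : Injective h) {τ : ℝ ≃o ℝ} (hτ0 : τ 0 = 0) {x : α}
    (hrel : ∀ t, h (φ t x) = ψ (τ t) (h x)) :
    positivePeriods ψ (h x) = τ '' positivePeriods φ x := by
  ext s
  obtain ⟨t, rfl⟩ := τ.surjective s
  rw [τ.injective.mem_set_image]
  have hpos : 0 < τ t ↔ 0 < t := by
    simpa only [hτ0] using τ.lt_iff_lt (x := 0) (y := t)
  have hper : ψ (τ t) (h x) = h x ↔ φ t x = x := by rw [← hrel, hinj.eq_iff]
  exact and_congr hpos hper

theorem Real.sInf_image_orderIso_of_map_zero (e : ℝ ≃o ℝ) (he : e 0 = 0) {s : Set ℝ}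
    (hs : BddBelow s) : sInf (e '' s) = e (sInf s) := by
  -- `sInf ∅ = 0` in `ℝ`, which is why `e` has to fix `0`.
  rcases s.eq_empty_or_nonempty with rfl | hne
  · simp [he]
  · exact (e.map_csInf' hne hs).symm

theorem stmt6_general {X Y : Type*}
    [NormedAddCommGroup X]
    [NormedAddCommGroup Y]
    (φ : ℝ → X → X) (ψ : ℝ → Y → Y)
    (h : X ≃ₜ Y) (τ : ℝ → X → ℝ)
    (hτmono : ∀ x, StrictMono fun t => τ t x)
    (hτsurj : ∀ x, Function.Surjective fun t => τ t x)
    (hτ0 : ∀ x, τ 0 x = 0)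
    (hrel : ∀ t x, h (φ t x) = ψ (τ t x) (h x))
    (x : X) :
    sInf {s : ℝ | 0 < s ∧ ψ s (h x) = h x} =
      τ (sInf {t : ℝ | 0 < t ∧ φ t x = x}) x := by
  let e : ℝ ≃o ℝ := (hτmono x).orderIsoOfSurjective _ (hτsurj x)
  calc sInf (positivePeriods ψ (h x))
      = sInf (e '' positivePeriods φ x) :=
        by rw [positivePeriods_eq_image (τ := e) h.injective (hτ0 x) (fun t => hrel t x)]
    _ = e (sInf (positivePeriods φ x)) :=
        Real.sInf_image_orderIso_of_map_zero e (hτ0 x) (bddBelow_positivePeriods φ x)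

/-- If the flow `φ` is `(h,τ)`-related to `ψ` (with `τ(·,x)` a strictly
increasing continuous bijection of `ℝ` fixing `0`), then for every periodic point `x`
of `φ`, the minimal `ψ`-period of `h x` equals `τ(T, x)` where `T` is the minimal
`φ`-period of `x` (minimal periods taken as `sInf {t > 0 | the point is t-periodic}`,
which is `0` for fixed points). -/
theorem stmt6 {X Y : Type*}
    [NormedAddCommGroup X] [NormedSpace ℝ X] [FiniteDimensional ℝ X]
    [NormedAddCommGroup Y] [NormedSpace ℝ Y] [FiniteDimensional ℝ Y]
    (φ : ℝ → X → X) (ψ : ℝ → Y → Y)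
    (hφcont : Continuous fun p : ℝ × X => φ p.1 p.2)
    (hφ0 : ∀ x, φ 0 x = x) (hφgrp : ∀ t s x, φ t (φ s x) = φ (t + s) x)
    (hψcont : Continuous fun p : ℝ × Y => ψ p.1 p.2)
    (hψ0 : ∀ y, ψ 0 y = y) (hψgrp : ∀ t s y, ψ t (ψ s y) = ψ (t + s) y)
    (h : X ≃ₜ Y) (τ : ℝ → X → ℝ)
    (hτmono : ∀ x, StrictMono fun t => τ t x)
    (hτcont : ∀ x, Continuous fun t => τ t x)
    (hτsurj : ∀ x, Function.Surjective fun t => τ t x)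
    (hτ0 : ∀ x, τ 0 x = 0)
    (hrel : ∀ t x, h (φ t x) = ψ (τ t x) (h x))
    (x : X) (hx : ∃ T : ℝ, 0 < T ∧ φ T x = x) :
    sInf {s : ℝ | 0 < s ∧ ψ s (h x) = h x} =
      τ (sInf {t : ℝ | 0 < t ∧ φ t x = x}) x :=
  stmt6_general φ ψ h τ hτmono hτsurj hτ0 hrel x
end

section
/- Let φ, ψ be flows on X, Y respectively. The uniform core of the product flow φ × ψ on X × Y equals the product of the uniform cores: C*(φ×ψ, X×Y) = C*(φ,X) × C*(ψ,Y). The same holds for the uniform (0,0)-cores C*₀. -/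
open Filter Topology

/-- The uniform core with respect to an orbit condition `P`: `C*(φ, X)` is the case
`P u := ∃ M, ∀ n, ‖u n‖ ≤ M` and `C*₀(φ, X)` the case `P u := u → 0`. -/
def uniformCore {X : Type*} [TopologicalSpace X] (P : (ℕ → X) → Prop) (φ : ℝ → X → X) :
    Set X :=
  {x | ∀ t : ℕ → ℝ, Tendsto (fun n => |t n|) atTop atTop →
    ∃ u : ℕ → X, Tendsto u atTop (𝓝 x) ∧ P fun n => φ (t n) (u n)}

theorem uniformCore_prodMap {X Y : Type*} [TopologicalSpace X] [TopologicalSpace Y]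
    {P : (ℕ → X) → Prop} {Q : (ℕ → Y) → Prop} {R : (ℕ → X × Y) → Prop}
    (hR : ∀ a b, R (fun n => (a n, b n)) ↔ P a ∧ Q b) (φ : ℝ → X → X) (ψ : ℝ → Y → Y) :
    uniformCore R (fun t p => (φ t p.1, ψ t p.2)) = uniformCore P φ ×ˢ uniformCore Q ψ := by
  ext ⟨x, y⟩
  refine ⟨fun h => ⟨fun t ht => ?_, fun t ht => ?_⟩, fun ⟨hx, hy⟩ t ht => ?_⟩
  · obtain ⟨q, hq, hRq⟩ := h t ht
    exact ⟨fun n => (q n).1, (continuous_fst.tendsto _).comp hq,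
      ((hR (fun n => φ (t n) (q n).1) (fun n => ψ (t n) (q n).2)).1 hRq).1⟩
  · obtain ⟨q, hq, hRq⟩ := h t ht
    exact ⟨fun n => (q n).2, (continuous_snd.tendsto _).comp hq,
      ((hR (fun n => φ (t n) (q n).1) (fun n => ψ (t n) (q n).2)).1 hRq).2⟩
  · obtain ⟨u, hu, hPu⟩ := hx t ht
    obtain ⟨v, hv, hQv⟩ := hy t ht
    exact ⟨fun n => (u n, v n), hu.prodMk_nhds hv, (hR _ _).2 ⟨hPu, hQv⟩⟩

theorem exists_forall_norm_prodMk_le_iff {X Y : Type*} [SeminormedAddCommGroup X]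
    [SeminormedAddCommGroup Y] (a : ℕ → X) (b : ℕ → Y) :
    (∃ M : ℝ, ∀ n, ‖(a n, b n)‖ ≤ M) ↔
      (∃ M : ℝ, ∀ n, ‖a n‖ ≤ M) ∧ ∃ M : ℝ, ∀ n, ‖b n‖ ≤ M := by
  refine ⟨fun ⟨M, hM⟩ => ⟨⟨M, fun n => (norm_fst_le _).trans (hM n)⟩,
    ⟨M, fun n => (norm_snd_le _).trans (hM n)⟩⟩, fun ⟨⟨M, hM⟩, ⟨N, hN⟩⟩ => ⟨max M N, fun n => ?_⟩⟩
  rw [Prod.norm_def]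
  exact max_le_max (hM n) (hN n)

theorem stmt7_general {X Y : Type*}
    [NormedAddCommGroup X]
    [NormedAddCommGroup Y]
    (φ : ℝ → X → X) (ψ : ℝ → Y → Y) :
    ({p : X × Y | ∀ t : ℕ → ℝ, Tendsto (fun n => |t n|) atTop atTop →
        ∃ q : ℕ → X × Y, Tendsto q atTop (𝓝 p) ∧
          ∃ M : ℝ, ∀ n, ‖(φ (t n) (q n).1, ψ (t n) (q n).2)‖ ≤ M}
      = {x : X | ∀ t : ℕ → ℝ, Tendsto (fun n => |t n|) atTop atTop →
          ∃ u : ℕ → X, Tendsto u atTop (𝓝 x) ∧ ∃ M : ℝ, ∀ n, ‖φ (t n) (u n)‖ ≤ M} ×ˢ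
        {y : Y | ∀ t : ℕ → ℝ, Tendsto (fun n => |t n|) atTop atTop →
          ∃ v : ℕ → Y, Tendsto v atTop (𝓝 y) ∧ ∃ M : ℝ, ∀ n, ‖ψ (t n) (v n)‖ ≤ M}) ∧
    ({p : X × Y | ∀ t : ℕ → ℝ, Tendsto (fun n => |t n|) atTop atTop →
        ∃ q : ℕ → X × Y, Tendsto q atTop (𝓝 p) ∧
          Tendsto (fun n => (φ (t n) (q n).1, ψ (t n) (q n).2)) atTop (𝓝 (0, 0))}
      = {x : X | ∀ t : ℕ → ℝ, Tendsto (fun n => |t n|) atTop atTop →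
          ∃ u : ℕ → X, Tendsto u atTop (𝓝 x) ∧
            Tendsto (fun n => φ (t n) (u n)) atTop (𝓝 0)} ×ˢ
        {y : Y | ∀ t : ℕ → ℝ, Tendsto (fun n => |t n|) atTop atTop →
          ∃ v : ℕ → Y, Tendsto v atTop (𝓝 y) ∧
            Tendsto (fun n => ψ (t n) (v n)) atTop (𝓝 0)}) :=
  ⟨uniformCore_prodMap (P := fun u => ∃ M : ℝ, ∀ n, ‖u n‖ ≤ M)
      (Q := fun v => ∃ M : ℝ, ∀ n, ‖v n‖ ≤ M) (R := fun q => ∃ M : ℝ, ∀ n, ‖q n‖ ≤ M)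
      exists_forall_norm_prodMk_le_iff φ ψ,
    uniformCore_prodMap (P := fun u => Tendsto u atTop (𝓝 0))
      (Q := fun v => Tendsto v atTop (𝓝 0)) (R := fun q => Tendsto q atTop (𝓝 0))
      (fun a b => Prod.tendsto_iff (fun n => (a n, b n)) 0) φ ψ⟩

/-- For flows `φ` on `X` and `ψ` on `Y`, the uniform core of the product
flow equals the product of the uniform cores, and likewise for the uniform
`(0,0)`-cores. -/
theorem stmt7 {X Y : Type*}
    [NormedAddCommGroup X] [NormedSpace ℝ X] [FiniteDimensional ℝ X]
    [NormedAddCommGroup Y] [NormedSpace ℝ Y] [FiniteDimensional ℝ Y]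
    (φ : ℝ → X → X) (ψ : ℝ → Y → Y)
    (hφcont : Continuous fun p : ℝ × X => φ p.1 p.2)
    (hφ0 : ∀ x, φ 0 x = x) (hφgrp : ∀ t s x, φ t (φ s x) = φ (t + s) x)
    (hψcont : Continuous fun p : ℝ × Y => ψ p.1 p.2)
    (hψ0 : ∀ y, ψ 0 y = y) (hψgrp : ∀ t s y, ψ t (ψ s y) = ψ (t + s) y) :
    ({p : X × Y | ∀ t : ℕ → ℝ, Tendsto (fun n => |t n|) atTop atTop →
        ∃ q : ℕ → X × Y, Tendsto q atTop (𝓝 p) ∧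
          ∃ M : ℝ, ∀ n, ‖(φ (t n) (q n).1, ψ (t n) (q n).2)‖ ≤ M}
      = {x : X | ∀ t : ℕ → ℝ, Tendsto (fun n => |t n|) atTop atTop →
          ∃ u : ℕ → X, Tendsto u atTop (𝓝 x) ∧ ∃ M : ℝ, ∀ n, ‖φ (t n) (u n)‖ ≤ M} ×ˢ
        {y : Y | ∀ t : ℕ → ℝ, Tendsto (fun n => |t n|) atTop atTop →
          ∃ v : ℕ → Y, Tendsto v atTop (𝓝 y) ∧ ∃ M : ℝ, ∀ n, ‖ψ (t n) (v n)‖ ≤ M}) ∧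
    ({p : X × Y | ∀ t : ℕ → ℝ, Tendsto (fun n => |t n|) atTop atTop →
        ∃ q : ℕ → X × Y, Tendsto q atTop (𝓝 p) ∧
          Tendsto (fun n => (φ (t n) (q n).1, ψ (t n) (q n).2)) atTop (𝓝 (0, 0))}
      = {x : X | ∀ t : ℕ → ℝ, Tendsto (fun n => |t n|) atTop atTop →
          ∃ u : ℕ → X, Tendsto u atTop (𝓝 x) ∧
            Tendsto (fun n => φ (t n) (u n)) atTop (𝓝 0)} ×ˢ
        {y : Y | ∀ t : ℕ → ℝ, Tendsto (fun n => |t n|) atTop atTop →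
          ∃ v : ℕ → Y, Tendsto v atTop (𝓝 y) ∧
            Tendsto (fun n => ψ (t n) (v n)) atTop (𝓝 0)}) :=
  stmt7_general φ ψ
end

section
/- Let φ, ψ be flows on X, Y and suppose φ is (h,τ)-related to ψ. Then for all x⁻, x⁺ ∈ X, h maps the (x⁻,x⁺)-core of φ onto the (h(x⁻),h(x⁺))-core of ψ: h(C_{x⁻,x⁺}(φ,X)) = C_{h(x⁻),h(x⁺)}(ψ,Y). -/
/-!
Write `J⁺(x)` for the prolongational limit set (the limits of `φ (tₙ, uₙ)` with `tₙ → ∞` and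
`uₙ → x`). The core is `{x | x⁺ ∈ J⁺(x), x⁻ ∈ J⁻(x)}` and time reversal exchanges `J⁺` and `J⁻`,
so it suffices to show `h z ∈ J⁺(h x) ↔ z ∈ J⁺(x)`. Subtracting the period `τ 0 x` of `h x`, we
may assume `τ 0 = 0`.

The monotone function `τ (·, u)` can only jump by periods of `h u`, and if it were bounded the
orbit of `u` would converge to a rest point. Hence for aperiodic `h u` it maps `[0, ∞)`
continuously onto itself, and for `h u` of minimal period `p` its reduction mod `p` is continuous
and hits every class at arbitrarily late times (otherwise its representative in a fundamental
interval would increase and the orbit would converge). So times can be transported both ways.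

The transported times may stay bounded along a subsequence. If `h x` has a positive period, the
limit then lies on the periodic orbit of `x`, which is contained in `J⁺(x)`. If `h x` is aperiodic
this cannot happen: by compactness of bounded time intervals, `τ (r, ·)` is lower semicontinuous
at `x`, and upper semicontinuous at `x` along aperiodic points.
-/

open Filter Topology Set Function

theorem AddSubgroup.countable_zmultiples {G : Type*} [AddGroup G] (p : G) :
    (zmultiples p : Set G).Countable :=
  (countable_range fun k : ℤ => k • p).mono fun _ hq => mem_zmultiples_iff.1 hq

section OrderedGroup

variable {G : Type*} [AddCommGroup G] [LinearOrder G] [IsOrderedAddMonoid G]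

theorem AddSubgroup.eq_bot_or_exists_eq_zmultiples_or_eq_top [TopologicalSpace G]
    [OrderTopology G] [Archimedean G] {S : AddSubgroup G} (hS : IsClosed (S : Set G)) :
    S = ⊥ ∨ (∃ p > 0, S = zmultiples p) ∨ S = ⊤ := by
  rcases S.dense_or_cyclic with hd | ⟨a, ha⟩
  · exact Or.inr (Or.inr (SetLike.coe_injective (hS.closure_eq ▸ hd.closure_eq)))
  rw [← zmultiples_eq_closure] at ha
  rcases lt_trichotomy a 0 with ha0 | rfl | ha0
  · exact Or.inr (Or.inl ⟨-a, neg_pos.2 ha0, by rw [zmultiples_neg, ha]⟩)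
  · exact Or.inl (by rw [ha, zmultiples_zero_eq_bot])
  · exact Or.inr (Or.inl ⟨a, ha0, ha⟩)

theorem AddSubgroup.exists_pos_mem_of_ne_bot {S : AddSubgroup G} (hS : S ≠ ⊥) :
    ∃ p > 0, p ∈ S := by
  obtain ⟨⟨q, hq⟩, hq0⟩ := AddSubgroup.ne_bot_iff_exists_ne_zero.1 hS
  refine ⟨|q|, abs_pos.2 (by simpa using hq0), ?_⟩
  rcases abs_choice q with h | h <;> rw [h]
  exacts [hq, S.neg_mem hq]

theorem AddSubgroup.eq_top_of_isClosed_of_not_countable [TopologicalSpace G] [OrderTopology G]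
    [Archimedean G] {S : AddSubgroup G} (hS : IsClosed (S : Set G)) (hc : ¬ (S : Set G).Countable) :
    S = ⊤ := by
  rcases eq_bot_or_exists_eq_zmultiples_or_eq_top hS with rfl | ⟨p, -, rfl⟩ | htop
  · exact absurd (countable_singleton 0) hc
  · exact absurd (countable_zmultiples p) hc
  · exact htop

theorem toIcoMod_add_of_lt [Archimedean G] {p : G} (hp : 0 < p) {c b d : G} (hd : 0 ≤ d)
    (hlt : toIcoMod hp c b + d < c + p) : toIcoMod hp c (b + d) = toIcoMod hp c b + d := by
  rw [toIcoMod_eq_iff]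
  refine ⟨⟨(toIcoMod_mem_Ico hp c b).1.trans (le_add_of_nonneg_right hd), hlt⟩,
    toIcoDiv hp c b, ?_⟩
  rw [← self_sub_toIcoDiv_zsmul]
  abel

end OrderedGroup

namespace Monotone

variable {Y : Type*} [TopologicalSpace Y] [T2Space Y] {f : ℝ → ℝ} {G : ℝ → Y}

theorem apply_leftLim_eq (hf : Monotone f) (hG : Continuous G) (hGf : Continuous (G ∘ f))
    (x : ℝ) : G (leftLim f x) = G (f x) :=
  tendsto_nhds_unique ((hG.tendsto _).comp (hf.tendsto_leftLim x))
    (hGf.continuousAt.tendsto.mono_left nhdsWithin_le_nhds)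

theorem apply_rightLim_eq (hf : Monotone f) (hG : Continuous G) (hGf : Continuous (G ∘ f))
    (x : ℝ) : G (rightLim f x) = G (f x) :=
  tendsto_nhds_unique ((hG.tendsto _).comp (hf.tendsto_rightLim x))
    (hGf.continuousAt.tendsto.mono_left nhdsWithin_le_nhds)

theorem continuous_of_continuous_comp (hf : Monotone f) (hG : Continuous G) (hinj : Injective G)
    (hGf : Continuous (G ∘ f)) : Continuous f :=
  continuous_iff_continuousAt.2 fun x => hf.continuousAt_iff_leftLim_eq_rightLim.2 <|
    hinj ((hf.apply_leftLim_eq hG hGf x).trans (hf.apply_rightLim_eq hG hGf x).symm)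

theorem continuous_coe_addCircle (hf : Monotone f) (hG : Continuous G) (hGf : Continuous (G ∘ f))
    {p : ℝ} (hGp : ∀ a b, G a = G b → (a : AddCircle p) = b) :
    Continuous fun t => (f t : AddCircle p) := by
  refine continuous_iff_continuousAt.2 fun x => continuousAt_iff_continuous_left'_right'.2 ⟨?_, ?_⟩
  · rw [ContinuousWithinAt, ← hGp _ _ (hf.apply_leftLim_eq hG hGf x)]
    exact (continuous_quotient_mk'.tendsto _).comp (hf.tendsto_leftLim x)
  · rw [ContinuousWithinAt, ← hGp _ _ (hf.apply_rightLim_eq hG hGf x)]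
    exact (continuous_quotient_mk'.tendsto _).comp (hf.tendsto_rightLim x)

theorem monotoneOn_toIcoMod (hf : Monotone f) {p : ℝ} (hp : 0 < p) {c C : ℝ}
    (hcont : Continuous fun t => (f t : AddCircle p))
    (havoid : ∀ t ≥ C, (f t : AddCircle p) ≠ c) :
    MonotoneOn (fun t => toIcoMod hp c (f t)) (Ici C) := by
  have := Fact.mk hp
  set g := fun t => toIcoMod hp c (f t) with hg
  have hgcont : ContinuousOn g (Ici C) := fun t ht =>
    (continuous_subtype_val.continuousAt.comp ((AddCircle.continuousAt_equivIco p c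
      (havoid t ht)).comp (f := fun t => (f t : AddCircle p))
        hcont.continuousAt)).continuousWithinAt
  -- `g` increases to the right of each point: a jump of `f` there is a multiple of `p`.
  have hright : ∀ x ≥ C, ∀ᶠ t in 𝓝[>] x, g x ≤ g t := by
    intro x _
    set R := rightLim f x
    have hR : toIcoMod hp c R = g x := by
      have : (R : AddCircle p) = f x :=
        tendsto_nhds_unique ((continuous_quotient_mk'.tendsto R).comp (hf.tendsto_rightLim x))
          (hcont.continuousAt.tendsto.mono_left nhdsWithin_le_nhds)
      exact congrArg (fun y : AddCircle p => (AddCircle.equivIco p c y : ℝ)) this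
    have hδ : R < R + (c + p - g x) := by linarith [(toIcoMod_mem_Ico hp c (f x)).2]
    filter_upwards [(hf.tendsto_rightLim x).eventually (gt_mem_nhds hδ), self_mem_nhdsWithin]
      with t ht htx
    have hRt : R ≤ f t := hf.rightLim_le htx
    have key := toIcoMod_add_of_lt hp (sub_nonneg.2 hRt) (b := R) (c := c) (by linarith)
    rw [add_sub_cancel, hR] at key
    simp only [hg, key]
    linarith
  intro a ha b _ hab
  refine IsClosed.Icc_subset_of_forall_mem_nhdsWithin (s := {t | g a ≤ g t}) ?_ (le_refl (g a)) ?_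
    ⟨hab, le_rfl⟩
  · rw [inter_comm]
    exact (hgcont.mono fun t ht => le_trans ha ht.1).preimage_isClosed_of_isClosed isClosed_Icc
      isClosed_Ici
  · exact fun x hx => (hright x (le_trans ha hx.2.1)).mono fun t ht => le_trans hx.1 ht

end Monotone

namespace Flow

variable {X Y : Type*} [TopologicalSpace X] [TopologicalSpace Y]

def periods (ϕ : Flow ℝ X) (x : X) : AddSubgroup ℝ where
  carrier := {t | ϕ t x = x}
  add_mem' {a b} ha hb := by simp only [mem_ofPred_eq, map_add] at *; rw [hb, ha]
  zero_mem' := ϕ.map_zero_apply x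
  neg_mem' {a} ha := by
    change ϕ (-a) x = x
    conv_lhs => rw [← ha, ← map_add, neg_add_cancel, map_zero_apply]

def prolongationalLimitSet (ϕ : Flow ℝ X) (x : X) : Set X :=
  {z | ∃ (t : ℕ → ℝ) (u : ℕ → X), Tendsto t atTop atTop ∧ Tendsto u atTop (𝓝 x) ∧
    Tendsto (fun n => ϕ (t n) (u n)) atTop (𝓝 z)}

def core (ϕ : Flow ℝ X) (xm xp : X) : Set X :=
  {x | xp ∈ ϕ.prolongationalLimitSet x ∧ xm ∈ ϕ.reverse.prolongationalLimitSet x}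

variable (ϕ : Flow ℝ X) {x z : X}

theorem mem_periods {t : ℝ} : t ∈ ϕ.periods x ↔ ϕ t x = x := Iff.rfl

theorem apply_eq_apply_iff {a b : ℝ} : ϕ a x = ϕ b x ↔ a - b ∈ ϕ.periods x := by
  conv_lhs => rw [← add_sub_cancel b a, map_add]
  exact (ϕ.toHomeomorph b).injective.eq_iff

theorem periods_apply (t : ℝ) : ϕ.periods (ϕ t x) = ϕ.periods x := by
  ext s
  rw [mem_periods, mem_periods, ← map_add, add_comm, map_add]
  exact (ϕ.toHomeomorph t).injective.eq_iff

theorem isClosed_periods [T2Space X] (x : X) : IsClosed (ϕ.periods x : Set ℝ) :=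
  isClosed_eq (by fun_prop) continuous_const

theorem periods_eq_top_of_tendsto [T2Space X] (hlim : Tendsto (fun t => ϕ t x) atTop (𝓝 z)) :
    ϕ.periods z = ⊤ := by
  refine eq_top_iff.2 fun s _ =>
    tendsto_nhds_unique ((ϕ.continuous_toFun s).tendsto z |>.comp hlim) ?_
  simpa only [comp_def, id, ← map_add]
    using hlim.comp (tendsto_atTop_add_const_left _ s tendsto_id)

theorem exists_mem_apply_eq_of_frequently [T2Space X] {K : Set ℝ} (hK : IsCompact K)
    {ι : Type*} {l : Filter ι} {u w : ι → X} (hu : Tendsto u l (𝓝 x)) (hw : Tendsto w l (𝓝 z))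
    (hfreq : ∃ᶠ n in l, ∃ t ∈ K, ϕ t (u n) = w n) : ∃ t ∈ K, ϕ t x = z := by
  have : CompactSpace K := isCompact_iff_compactSpace.1 hK
  have hclosed : IsClosed {q : X × X | ∃ t ∈ K, ϕ t q.1 = q.2} := by
    convert isClosedMap_snd_of_compactSpace _
      (isClosed_eq (by fun_prop) (by fun_prop) : IsClosed {q : K × (X × X) | ϕ q.1 q.2.1 = q.2.2})
    ext q
    simp
  exact hclosed.mem_of_frequently_of_tendsto hfreq (hu.prodMk_nhds hw)

theorem apply_mem_prolongationalLimitSet {p : ℝ} (hp : 0 < p) (hper : p ∈ ϕ.periods x) (s : ℝ) :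
    ϕ s x ∈ ϕ.prolongationalLimitSet x := by
  refine ⟨fun n => s + n * p, fun _ => x, ?_, tendsto_const_nhds,
    tendsto_const_nhds.congr fun n => ?_⟩
  · exact tendsto_atTop_add_const_left _ s (tendsto_natCast_atTop_atTop.atTop_mul_const hp)
  · rw [eq_comm, apply_eq_apply_iff, add_sub_cancel_left, ← nsmul_eq_mul]
    exact (ϕ.periods x).nsmul_mem hper n

theorem core_eq (xm xp : X) :
    ϕ.core xm xp = {x | ∃ (tp tm : ℕ → ℝ) (up um : ℕ → X),
      Tendsto tp atTop atTop ∧ Tendsto tm atTop atBot ∧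
      Tendsto up atTop (𝓝 x) ∧ Tendsto um atTop (𝓝 x) ∧
      Tendsto (fun n => ϕ (tp n) (up n)) atTop (𝓝 xp) ∧
      Tendsto (fun n => ϕ (tm n) (um n)) atTop (𝓝 xm)} := by
  ext x
  constructor
  · rintro ⟨⟨tp, up, htp, hup, hp⟩, ⟨tm, um, htm, hum, hm⟩⟩
    refine ⟨tp, fun n => -tm n, up, um, htp, tendsto_neg_atTop_atBot.comp htm, hup, hum, hp, ?_⟩
    simpa using hm
  · rintro ⟨tp, tm, up, um, htp, htm, hup, hum, hp, hm⟩
    refine ⟨⟨tp, up, htp, hup, hp⟩, ⟨fun n => -tm n, um, tendsto_neg_atBot_atTop.comp htm, hum, ?_⟩⟩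
    simpa using hm

structure IsRelated (ϕ : Flow ℝ X) (ψ : Flow ℝ Y) (h : X ≃ₜ Y) (τ : ℝ → X → ℝ) : Prop where
  strictMono : ∀ x, StrictMono (τ · x)
  apply_map : ∀ t x, h (ϕ t x) = ψ (τ t x) (h x)

namespace IsRelated

variable {ϕ : Flow ℝ X} {ψ : Flow ℝ Y} {h : X ≃ₜ Y} {τ : ℝ → X → ℝ}
  (hr : ϕ.IsRelated ψ h τ) {x z : X}
include hr

theorem apply_zero_mem_periods (x : X) : τ 0 x ∈ ψ.periods (h x) := by
  rw [mem_periods, ← hr.apply_map, map_zero_apply]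

theorem sub_apply_zero : ϕ.IsRelated ψ h (fun t x => τ t x - τ 0 x) where
  strictMono x _ _ hab := sub_lt_sub_right (hr.strictMono x hab) _
  apply_map t x := by
    rw [hr.apply_map, apply_eq_apply_iff, sub_sub_cancel]
    exact hr.apply_zero_mem_periods x

theorem reverse : ϕ.reverse.IsRelated ψ.reverse h (fun t x => -τ (-t) x) where
  strictMono x _ _ hab := neg_lt_neg (hr.strictMono x (neg_lt_neg hab))
  apply_map t x := by simp only [reverse_apply, neg_neg, hr.apply_map]

theorem continuous_orbit (x : X) : Continuous fun t => ψ (τ t x) (h x) := by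
  simp only [← hr.apply_map]
  fun_prop

variable [T2Space Y]

theorem continuous_of_periods_eq_bot (hx : ψ.periods (h x) = ⊥) : Continuous (τ · x) :=
  (hr.strictMono x).monotone.continuous_of_continuous_comp (G := fun s => ψ s (h x))
    (by fun_prop) (fun a b hab => by simpa [apply_eq_apply_iff, hx, sub_eq_zero] using hab)
    (hr.continuous_orbit x)

theorem periods_map_eq_top (hx : ϕ.periods x = ⊤) : ψ.periods (h x) = ⊤ := by
  refine AddSubgroup.eq_top_of_isClosed_of_not_countable (ψ.isClosed_periods _) fun hc => ?_
  refine Cardinal.not_countable_real ((hc.preimage (hr.strictMono x).injective).mono fun t _ => ?_)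
  have hxt : ϕ t x = x := (hx ▸ AddSubgroup.mem_top t : t ∈ ϕ.periods x)
  rw [mem_preimage, SetLike.mem_coe, mem_periods, ← hr.apply_map, hxt]

theorem lowerSemicontinuousAt (hτ0 : ∀ x, τ 0 x = 0) (hx : ψ.periods (h x) = ⊥) {r : ℝ}
    (hr0 : 0 ≤ r) : LowerSemicontinuousAt (τ r) x := by
  intro M hM
  by_contra hfreq
  rw [not_eventually] at hfreq
  obtain ⟨ρ, hρ, hρeq⟩ := ψ.exists_mem_apply_eq_of_frequently isCompact_Icc
    (h.continuous.tendsto x) ((h.continuous.comp (ϕ.continuous_toFun r)).tendsto x)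
    (hfreq.mono fun u hu => ⟨τ r u, ⟨hτ0 u ▸ (hr.strictMono u).monotone hr0, not_lt.1 hu⟩,
      (hr.apply_map r u).symm⟩)
  rw [comp_apply, hr.apply_map, apply_eq_apply_iff, hx, AddSubgroup.mem_bot, sub_eq_zero] at hρeq
  linarith [hρ.2]

variable [T2Space X]

theorem periods_map_eq_top_of_tendsto {a : ℝ}
    (hlim : Tendsto (fun t => ψ (τ t x) (h x)) atTop (𝓝 (ψ a (h x)))) : ψ.periods (h x) = ⊤ := by
  have hϕ : Tendsto (fun t => ϕ t x) atTop (𝓝 (h.symm (ψ a (h x)))) := by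
    simpa only [comp_def, ← hr.apply_map, Homeomorph.symm_apply_apply]
      using (h.symm.continuous.tendsto _).comp hlim
  simpa only [Homeomorph.apply_symm_apply, periods_apply]
    using hr.periods_map_eq_top (ϕ.periods_eq_top_of_tendsto hϕ)

theorem tendsto_atTop (hx : ψ.periods (h x) ≠ ⊤) : Tendsto (τ · x) atTop atTop := by
  refine (hr.strictMono x).monotone.tendsto_atTop_atTop_iff.2 fun b => ?_
  by_contra! hb
  have hbdd : BddAbove (range (τ · x)) := ⟨b, forall_mem_range.2 fun t => (hb t).le⟩
  have hψ : Continuous fun s => ψ s (h x) := by fun_prop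
  exact hx (hr.periods_map_eq_top_of_tendsto
    ((hψ.tendsto _).comp (tendsto_atTop_ciSup (hr.strictMono x).monotone hbdd)))

theorem exists_nonneg_eq (hτ0 : τ 0 x = 0) (hx : ψ.periods (h x) = ⊥) {s : ℝ} (hs : 0 ≤ s) :
    ∃ t ≥ 0, τ t x = s := by
  obtain ⟨T, hTs, hT0⟩ := (((hr.tendsto_atTop (hx ▸ bot_ne_top)).eventually_ge_atTop s).and
    (eventually_ge_atTop 0)).exists
  obtain ⟨t, ht, hts⟩ := intermediate_value_Icc hT0
    (hr.continuous_of_periods_eq_bot hx).continuousOn ⟨by rwa [hτ0], hTs⟩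
  exact ⟨t, ht.1, hts⟩

theorem exists_ge_apply_eq_of_periods_eq_zmultiples {p : ℝ} (hp : 0 < p)
    (hx : ψ.periods (h x) = AddSubgroup.zmultiples p) (s C : ℝ) :
    ∃ t ≥ C, h (ϕ t x) = ψ s (h x) := by
  have hcoe : ∀ a b : ℝ, ψ a (h x) = ψ b (h x) ↔ (a : AddCircle p) = b := fun a b => by
    rw [apply_eq_apply_iff, hx]
    exact QuotientAddGroup.eq_iff_sub_mem.symm
  by_contra! hne
  have hmono := (hr.strictMono x).monotone
  have hcont : Continuous fun t => (τ t x : AddCircle p) :=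
    hmono.continuous_coe_addCircle (G := fun a => ψ a (h x)) (by fun_prop)
      (hr.continuous_orbit x) fun a b => (hcoe a b).1
  have havoid : ∀ t ≥ C, (τ t x : AddCircle p) ≠ s := fun t ht => by
    rw [Ne, ← hcoe, ← hr.apply_map]
    exact hne t ht
  -- The representative of `τ t x` in `[s, s + p)` increases, so the orbit would converge.
  set g : ℝ → ℝ := fun t => toIcoMod hp s (τ (max t C) x)
  have hg : Monotone g := fun a b hab => hmono.monotoneOn_toIcoMod hp hcont havoid
    (le_max_right a C) (le_max_right b C) (max_le_max hab le_rfl)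
  have hbdd : BddAbove (range g) :=
    ⟨s + p, forall_mem_range.2 fun t => (toIcoMod_mem_Ico hp s _).2.le⟩
  have hψ : Continuous fun a => ψ a (h x) := by fun_prop
  have hlim : Tendsto (fun t => ψ (τ t x) (h x)) atTop (𝓝 (ψ (⨆ t, g t) (h x))) := by
    refine ((hψ.tendsto _).comp (tendsto_atTop_ciSup hg hbdd)).congr' ?_
    filter_upwards [eventually_ge_atTop C] with t ht
    rw [comp_apply, apply_eq_apply_iff, hx]
    simp only [g, max_eq_left ht, toIcoMod_sub_self]
    exact AddSubgroup.zsmul_mem_zmultiples p _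
  have htop := hr.periods_map_eq_top_of_tendsto hlim
  rw [hx] at htop
  exact Cardinal.not_countable_real (by simpa [htop] using AddSubgroup.countable_zmultiples p)

theorem exists_ge_apply_eq (hx : ψ.periods (h x) ≠ ⊥) (s C : ℝ) :
    ∃ t ≥ C, h (ϕ t x) = ψ s (h x) := by
  rcases AddSubgroup.eq_bot_or_exists_eq_zmultiples_or_eq_top (ψ.isClosed_periods (h x)) with
    hbot | ⟨p, hp, hper⟩ | htop
  · exact absurd hbot hx
  · exact hr.exists_ge_apply_eq_of_periods_eq_zmultiples hp hper s C
  · refine ⟨C, le_rfl, ?_⟩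
    rw [hr.apply_map, apply_eq_apply_iff, htop]
    exact AddSubgroup.mem_top _

theorem exists_apply_eq (hτ0 : τ 0 x = 0) {s : ℝ} (hs : 0 ≤ s) (C : ℝ) :
    ∃ t, h (ϕ t x) = ψ s (h x) ∧ (C ≤ t ∨ ψ.periods (h x) = ⊥ ∧ 0 ≤ t ∧ τ t x = s) := by
  rcases eq_or_ne (ψ.periods (h x)) ⊥ with hbot | hnbot
  · obtain ⟨t, ht0, hτt⟩ := hr.exists_nonneg_eq hτ0 hbot hs
    exact ⟨t, by rw [hr.apply_map, hτt], Or.inr ⟨hbot, ht0, hτt⟩⟩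
  · obtain ⟨t, htC, heq⟩ := hr.exists_ge_apply_eq hnbot s C
    exact ⟨t, heq, Or.inl htC⟩

theorem upperSemicontinuousWithinAt (hτ0 : ∀ x, τ 0 x = 0) (hx : ψ.periods (h x) = ⊥) {M : ℝ}
    (hM : 0 ≤ M) : UpperSemicontinuousWithinAt (τ M) {u | ψ.periods (h u) = ⊥} x := by
  intro y hy
  by_contra hfreq
  rw [not_eventually] at hfreq
  have hy0 : 0 ≤ y := by linarith [hτ0 x ▸ (hr.strictMono x).monotone hM]
  have hreach : ∃ᶠ u in 𝓝[{u | ψ.periods (h u) = ⊥}] x,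
      ∃ ρ ∈ Icc 0 M, ϕ ρ u = h.symm (ψ y (h u)) := by
    refine (hfreq.and_eventually self_mem_nhdsWithin).mono fun u ⟨hu, hbot⟩ => ?_
    obtain ⟨ρ, hρ0, hρ⟩ := hr.exists_nonneg_eq (hτ0 u) hbot hy0
    refine ⟨ρ, ⟨hρ0, (hr.strictMono u).le_iff_le.1 (hρ ▸ not_lt.1 hu)⟩, ?_⟩
    rw [← hρ, ← hr.apply_map, Homeomorph.symm_apply_apply]
  obtain ⟨ρ, hρ, hρeq⟩ := ϕ.exists_mem_apply_eq_of_frequently isCompact_Icc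
    (tendsto_id.mono_left nhdsWithin_le_nhds)
    (((h.symm.continuous.comp ((ψ.continuous_toFun y).comp h.continuous)).tendsto x).mono_left
      nhdsWithin_le_nhds) hreach
  rw [← h.injective.eq_iff, comp_apply, comp_apply, Homeomorph.apply_symm_apply, hr.apply_map,
    apply_eq_apply_iff, hx, AddSubgroup.mem_bot, sub_eq_zero] at hρeq
  linarith [(hr.strictMono x).monotone hρ.2]

theorem tendsto_apply_atTop_of_periods_eq_bot (hτ0 : ∀ x, τ 0 x = 0) (hx : ψ.periods (h x) = ⊥)
    {t : ℕ → ℝ} {u : ℕ → X} (ht : Tendsto t atTop atTop) (hu : Tendsto u atTop (𝓝 x)) :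
    Tendsto (fun n => τ (t n) (u n)) atTop atTop := by
  refine Filter.tendsto_atTop.2 fun B => ?_
  obtain ⟨r, hrB, hr0⟩ := (((hr.tendsto_atTop (hx ▸ bot_ne_top)).eventually_gt_atTop B).and
    (eventually_ge_atTop 0)).exists
  filter_upwards [hu.eventually (hr.lowerSemicontinuousAt hτ0 hx hr0 B hrB),
    ht.eventually_ge_atTop r] with n hn hrn
  exact hn.le.trans ((hr.strictMono (u n)).monotone hrn)

theorem map_mem_prolongationalLimitSet (hτ0 : ∀ x, τ 0 x = 0)
    (hz : z ∈ ϕ.prolongationalLimitSet x) : h z ∈ ψ.prolongationalLimitSet (h x) := by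
  obtain ⟨t, u, ht, hu, hϕ⟩ := hz
  have hhu : Tendsto (fun n => h (u n)) atTop (𝓝 (h x)) := (h.continuous.tendsto x).comp hu
  have hψ : Tendsto (fun n => ψ (τ (t n) (u n)) (h (u n))) atTop (𝓝 (h z)) := by
    simpa only [comp_def, hr.apply_map] using (h.continuous.tendsto z).comp hϕ
  by_cases hτt : Tendsto (fun n => τ (t n) (u n)) atTop atTop
  · exact ⟨_, _, hτt, hhu, hψ⟩
  have hnbot : ψ.periods (h x) ≠ ⊥ := fun hbot =>
    hτt (hr.tendsto_apply_atTop_of_periods_eq_bot hτ0 hbot ht hu)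
  obtain ⟨M, hM⟩ : ∃ M, ∃ᶠ n in atTop, τ (t n) (u n) < M := by
    simpa only [Filter.tendsto_atTop, not_forall, not_eventually, not_le] using hτt
  obtain ⟨s, -, hs⟩ := ψ.exists_mem_apply_eq_of_frequently isCompact_Icc hhu hψ
    ((hM.and_eventually (ht.eventually_ge_atTop 0)).mono fun n ⟨hn, h0⟩ =>
      ⟨_, ⟨hτ0 (u n) ▸ (hr.strictMono (u n)).monotone h0, hn.le⟩, rfl⟩)
  obtain ⟨p, hp, hper⟩ := AddSubgroup.exists_pos_mem_of_ne_bot hnbot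
  exact hs ▸ ψ.apply_mem_prolongationalLimitSet hp hper s

theorem mem_prolongationalLimitSet_of_map (hτ0 : ∀ x, τ 0 x = 0)
    (hz : h z ∈ ψ.prolongationalLimitSet (h x)) : z ∈ ϕ.prolongationalLimitSet x := by
  obtain ⟨s, v, hs, hv, hψ⟩ := hz
  set u := fun n => h.symm (v n)
  have hu : Tendsto u atTop (𝓝 x) := by
    have := (h.symm.continuous.tendsto (h x)).comp hv
    rwa [Homeomorph.symm_apply_apply] at this
  choose t ht using fun n : ℕ => hr.exists_apply_eq (hτ0 (u n)) (le_max_right (s n) 0) n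
  have hϕ : Tendsto (fun n => ϕ (t n) (u n)) atTop (𝓝 z) := by
    have := (h.symm.continuous.tendsto _).comp hψ
    rw [Homeomorph.symm_apply_apply] at this
    refine this.congr' ((hs.eventually_ge_atTop 0).mono fun n hn => ?_)
    rw [comp_apply, ← max_eq_left hn, ← Homeomorph.apply_symm_apply h (v n), ← (ht n).1,
      Homeomorph.symm_apply_apply]
  by_cases htt : Tendsto t atTop atTop
  · exact ⟨t, u, htt, hu, hϕ⟩
  obtain ⟨M, hM⟩ : ∃ M, ∃ᶠ n in atTop, t n < M := by
    simpa only [Filter.tendsto_atTop, not_forall, not_eventually, not_le] using htt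
  have hbound : ∃ᶠ n in atTop,
      ψ.periods (h (u n)) = ⊥ ∧ t n ∈ Icc 0 M ∧ τ (t n) (u n) = max (s n) 0 :=
    (hM.and_eventually (eventually_gt_atTop ⌈M⌉₊)).mono fun n ⟨hn, hnM⟩ =>
      have hMn : M < n := (Nat.le_ceil M).trans_lt (by exact_mod_cast hnM)
      match (ht n).2.resolve_left (by linarith) with
      | ⟨hbot, h0, hτn⟩ => ⟨hbot, ⟨h0, hn.le⟩, hτn⟩
  obtain ⟨t₀, ht₀M, ht₀⟩ := ϕ.exists_mem_apply_eq_of_frequently isCompact_Icc hu hϕ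
    (hbound.mono fun n hn => ⟨t n, hn.2.1, rfl⟩)
  rcases eq_or_ne (ψ.periods (h x)) ⊥ with hbot | hnbot
  · -- `τ M (u n) ≥ τ (t n) (u n) → ∞` along the aperiodic `u n`, but it stays below `τ M x + 1`.
    have hsc := hr.upperSemicontinuousWithinAt hτ0 hbot (ht₀M.1.trans ht₀M.2) _ (lt_add_one _)
    obtain ⟨n, ⟨hbotn, htn, hτn⟩, hlt, hsn⟩ := (hbound.and_eventually
      ((hu.eventually (eventually_nhdsWithin_iff.1 hsc)).and
        (hs.eventually_ge_atTop (τ M x + 1)))).exists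
    linarith [hlt hbotn, hτn ▸ (hr.strictMono (u n)).monotone htn.2, le_max_left (s n) 0]
  · obtain ⟨t₁, ht₁, heq⟩ := hr.exists_ge_apply_eq hnbot (τ t₀ x) (t₀ + 1)
    rw [← hr.apply_map, h.injective.eq_iff, apply_eq_apply_iff] at heq
    exact ht₀ ▸ ϕ.apply_mem_prolongationalLimitSet (by linarith) heq t₀

theorem map_mem_prolongationalLimitSet_iff (hτ0 : ∀ x, τ 0 x = 0) :
    h z ∈ ψ.prolongationalLimitSet (h x) ↔ z ∈ ϕ.prolongationalLimitSet x :=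
  ⟨hr.mem_prolongationalLimitSet_of_map hτ0, hr.map_mem_prolongationalLimitSet hτ0⟩

theorem image_core (xm xp : X) : h '' ϕ.core xm xp = ψ.core (h xm) (h xp) := by
  have hr₀ := hr.sub_apply_zero
  ext y
  obtain ⟨x, rfl⟩ := h.surjective y
  rw [h.injective.mem_set_image]
  exact and_congr (hr₀.map_mem_prolongationalLimitSet_iff fun _ => sub_self _).symm
    (hr₀.reverse.map_mem_prolongationalLimitSet_iff fun _ => by simp).symm

end IsRelated

end Flow

theorem stmt8_general {X Y : Type*}
    [NormedAddCommGroup X]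
    [NormedAddCommGroup Y]
    (φ : ℝ → X → X) (ψ : ℝ → Y → Y)
    (hφcont : Continuous fun p : ℝ × X => φ p.1 p.2)
    (hφ0 : ∀ x, φ 0 x = x) (hφgrp : ∀ t s x, φ t (φ s x) = φ (t + s) x)
    (hψcont : Continuous fun p : ℝ × Y => ψ p.1 p.2)
    (hψ0 : ∀ y, ψ 0 y = y) (hψgrp : ∀ t s y, ψ t (ψ s y) = ψ (t + s) y)
    (h : X ≃ₜ Y) (τ : ℝ → X → ℝ)
    (hτ : ∀ x, StrictMono fun t => τ t x)
    (hrel : ∀ t x, h (φ t x) = ψ (τ t x) (h x))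
    (xm xp : X) :
    h '' {x : X | ∃ (tp tm : ℕ → ℝ) (up um : ℕ → X),
        Tendsto tp atTop atTop ∧ Tendsto tm atTop atBot ∧
        Tendsto up atTop (𝓝 x) ∧ Tendsto um atTop (𝓝 x) ∧
        Tendsto (fun n => φ (tp n) (up n)) atTop (𝓝 xp) ∧
        Tendsto (fun n => φ (tm n) (um n)) atTop (𝓝 xm)}
      = {y : Y | ∃ (tp tm : ℕ → ℝ) (vp vm : ℕ → Y),
        Tendsto tp atTop atTop ∧ Tendsto tm atTop atBot ∧
        Tendsto vp atTop (𝓝 y) ∧ Tendsto vm atTop (𝓝 y) ∧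
        Tendsto (fun n => ψ (tp n) (vp n)) atTop (𝓝 (h xp)) ∧
        Tendsto (fun n => ψ (tm n) (vm n)) atTop (𝓝 (h xm))} := by
  let ϕ' : Flow ℝ X := ⟨φ, hφcont, fun t s x => (hφgrp t s x).symm, hφ0⟩
  let ψ' : Flow ℝ Y := ⟨ψ, hψcont, fun t s y => (hψgrp t s y).symm, hψ0⟩
  have hr : ϕ'.IsRelated ψ' h τ := ⟨hτ, hrel⟩
  have key := hr.image_core xm xp
  rwa [Flow.core_eq, Flow.core_eq] at key

/-- If the flow `φ` on `X` is `(h,τ)`-related to the flow `ψ` on `Y`,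
then for all `x⁻, x⁺ ∈ X`, `h` maps the `(x⁻,x⁺)`-core of `φ` onto the
`(h x⁻, h x⁺)`-core of `ψ`. -/
theorem stmt8 {X Y : Type*}
    [NormedAddCommGroup X] [NormedSpace ℝ X] [FiniteDimensional ℝ X]
    [NormedAddCommGroup Y] [NormedSpace ℝ Y] [FiniteDimensional ℝ Y]
    (φ : ℝ → X → X) (ψ : ℝ → Y → Y)
    (hφcont : Continuous fun p : ℝ × X => φ p.1 p.2)
    (hφ0 : ∀ x, φ 0 x = x) (hφgrp : ∀ t s x, φ t (φ s x) = φ (t + s) x)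
    (hψcont : Continuous fun p : ℝ × Y => ψ p.1 p.2)
    (hψ0 : ∀ y, ψ 0 y = y) (hψgrp : ∀ t s y, ψ t (ψ s y) = ψ (t + s) y)
    (h : X ≃ₜ Y) (τ : ℝ → X → ℝ)
    (hτ : ∀ x, StrictMono fun t => τ t x)
    (hrel : ∀ t x, h (φ t x) = ψ (τ t x) (h x))
    (xm xp : X) :
    h '' {x : X | ∃ (tp tm : ℕ → ℝ) (up um : ℕ → X),
        Tendsto tp atTop atTop ∧ Tendsto tm atTop atBot ∧
        Tendsto up atTop (𝓝 x) ∧ Tendsto um atTop (𝓝 x) ∧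
        Tendsto (fun n => φ (tp n) (up n)) atTop (𝓝 xp) ∧
        Tendsto (fun n => φ (tm n) (um n)) atTop (𝓝 xm)}
      = {y : Y | ∃ (tp tm : ℕ → ℝ) (vp vm : ℕ → Y),
        Tendsto tp atTop atTop ∧ Tendsto tm atTop atBot ∧
        Tendsto vp atTop (𝓝 y) ∧ Tendsto vm atTop (𝓝 y) ∧
        Tendsto (fun n => ψ (tp n) (vp n)) atTop (𝓝 (h xp)) ∧
        Tendsto (fun n => ψ (tm n) (vm n)) atTop (𝓝 (h xm))} :=
  stmt8_general φ ψ hφcont hφ0 hφgrp hψcont hψ0 hψgrp h τ hτ hrel xm xp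
end

section
/- Let u, ũ ∈ ℝ² and let κ_u, κ_ũ be the Kronecker flows on the 2-torus 𝕋 = ℝ²/ℤ² given by κ_u(t,z) = z + tu (mod ℤ²). If f : 𝕋 → 𝕋 is continuous and maps some κ_u-orbit into a κ_ũ-orbit, then L_f u and ũ are linearly dependent, where L_f ∈ ℤ^{2×2} is the matrix induced by f on the fundamental group (i.e., the unique integer matrix with sup_{x∈ℝ²} ‖F(x) − L_f x‖ < ∞ for a lift F of f). -/
/-!
Let `φ` be a linear functional killing `ũ`. Along the orbit, `t ↦ φ (F (z + t • u))` is
continuous and takes values in the countable set `φ (z̃ + ℤ²)`, so it is constant. Since `F - L`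
is bounded, `t ↦ φ (L (z + t • u)) = φ (L z) + t φ (L u)` is then bounded as well, forcing
`φ (L u) = 0`. Taking for `φ` the determinant against `ũ` gives the linear dependence.
-/

open Set

theorem Continuous.apply_eq_of_countable_range {X Y : Type*} [TopologicalSpace X]
    [PreconnectedSpace X] [MetricSpace Y] {f : X → Y} (hf : Continuous f)
    (hc : (range f).Countable) (x y : X) : f x = f y :=
  hc.isTotallyDisconnected _ subset_rfl (isPreconnected_range hf) ⟨x, rfl⟩ ⟨y, rfl⟩

theorem eq_zero_of_forall_norm_add_smul_le {E : Type*} [NormedAddCommGroup E] [NormedSpace ℝ E]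
    {a c : E} {M : ℝ} (h : ∀ t : ℝ, ‖a + t • c‖ ≤ M) : c = 0 := by
  by_contra hc
  have hc : 0 < ‖c‖ := norm_pos_iff.mpr hc
  have hM : ‖a‖ ≤ M := by simpa using h 0
  set t := (M + ‖a‖ + 1) / ‖c‖
  have ht : ‖t • c‖ = M + ‖a‖ + 1 := by
    rw [norm_smul, Real.norm_of_nonneg (div_nonneg (by linarith [norm_nonneg a]) hc.le),
      div_mul_cancel₀ _ hc.ne']
  have := (norm_sub_le (a + t • c) a).trans (add_le_add_left (h t) _)
  rw [add_sub_cancel_left] at this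
  linarith

theorem exists_smul_add_smul_eq_zero_of_det_eq_zero {K : Type*} [Field K]
    {x v : Fin 2 → K} (h : (Matrix.of ![x, v]).det = 0) :
    ∃ a b : K, ¬(a = 0 ∧ b = 0) ∧ a • x + b • v = 0 := by
  obtain ⟨p, hp, hpM⟩ := Matrix.exists_vecMul_eq_zero_iff.mpr h
  refine ⟨p 0, p 1, fun h0 => hp (funext fun i => by fin_cases i <;> simp [h0]), ?_⟩
  simpa [Matrix.vecMul, dotProduct, Fin.sum_univ_two, funext_iff, mul_comm, Matrix.vecHead,
    Matrix.vecTail] using hpM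

variable {E : Type*} [NormedAddCommGroup E] [NormedSpace ℝ E]

theorem apply_map_eq_zero_of_orbit_subset_parallel_lines {F : E → E} (hF : Continuous F)
    {A : E →ₗ[ℝ] E} {M : ℝ} (hM : ∀ x, ‖F x - A x‖ ≤ M) {Λ : Set E} (hΛ : Λ.Countable)
    {u v z w : E}
    (horb : ∀ t : ℝ, ∃ s : ℝ, ∃ k ∈ Λ, F (z + t • u) = w + s • v + k)
    {φ : E →L[ℝ] ℝ} (hφ : φ v = 0) : φ (A u) = 0 := by
  set h : ℝ → ℝ := fun t => φ (F (z + t • u))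
  have h_range : range h ⊆ (fun k => φ (w + k)) '' Λ := by
    rintro _ ⟨t, rfl⟩
    obtain ⟨s, k, hk, hFt⟩ := horb t
    exact ⟨k, hk, by simp [h, hFt, hφ]⟩
  have h_const (t : ℝ) : h t = h 0 :=
    Continuous.apply_eq_of_countable_range (by fun_prop) ((hΛ.image _).mono h_range) t 0
  refine neg_eq_zero.mp (eq_zero_of_forall_norm_add_smul_le (a := h 0 - φ (A z))
    (M := ‖φ‖ * M) fun t => ?_)
  calc ‖h 0 - φ (A z) + t • -φ (A u)‖ = ‖φ (F (z + t • u) - A (z + t • u))‖ := by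
        rw [← h_const t]
        simp only [h, map_sub, map_add, map_smul, smul_eq_mul]
        ring_nf
    _ ≤ ‖φ‖ * M := φ.le_of_opNorm_le_of_le le_rfl (hM _)

theorem stmt10_general (u v : Fin 2 → ℝ)
    (F : (Fin 2 → ℝ) → (Fin 2 → ℝ)) (hFcont : Continuous F)
    (L : Matrix (Fin 2) (Fin 2) ℤ)
    (hL : ∃ M : ℝ, ∀ x : Fin 2 → ℝ, ‖F x - (L.map (Int.cast : ℤ → ℝ)).mulVec x‖ ≤ M)
    (z w : Fin 2 → ℝ)
    (horb : ∀ t : ℝ, ∃ (s : ℝ) (k : Fin 2 → ℤ),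
      F (z + t • u) = w + s • v + fun i => (k i : ℝ)) :
    ∃ a b : ℝ, ¬(a = 0 ∧ b = 0) ∧
      a • (L.map (Int.cast : ℤ → ℝ)).mulVec u + b • v = 0 := by
  obtain ⟨M, hM⟩ := hL
  set φ : (Fin 2 → ℝ) →L[ℝ] ℝ :=
    v 1 • ContinuousLinearMap.proj 0 - v 0 • ContinuousLinearMap.proj 1
  have hφ : φ v = 0 := by simp [φ, mul_comm]
  have hLu := apply_map_eq_zero_of_orbit_subset_parallel_lines hFcont
    (A := (L.map Int.cast).mulVecLin) hM (countable_range fun (k : Fin 2 → ℤ) i => (k i : ℝ))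
    (fun t => (horb t).imp fun s ⟨k, hk⟩ => ⟨_, ⟨k, rfl⟩, hk⟩) hφ
  refine exists_smul_add_smul_eq_zero_of_det_eq_zero ?_
  simpa [φ, Matrix.det_fin_two, mul_comm] using hLu

/-- (Rigidity of Kronecker flows on the 2-torus, stated via lifts.)
Let `F : ℝ² → ℝ²` be a continuous lift of a continuous map `f` of the torus
`𝕋 = ℝ²/ℤ²` (i.e. `F (x + k) - F x ∈ ℤ²` for every integer vector `k`), and let
`L ∈ ℤ^{2×2}` be the induced matrix, i.e. `F - L` is bounded. If `f` maps some
`κ_u`-orbit into a `κ_ũ`-orbit, i.e. there are `z, z̃ ∈ ℝ²` such that for every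
`t ∈ ℝ` there are `s ∈ ℝ` and `k ∈ ℤ²` with `F (z + t • u) = z̃ + s • ũ + k`, then
`L u` and `ũ` are linearly dependent. -/
theorem stmt10 (u v : Fin 2 → ℝ)
    (F : (Fin 2 → ℝ) → (Fin 2 → ℝ)) (hFcont : Continuous F)
    (hFlift : ∀ (x : Fin 2 → ℝ) (k : Fin 2 → ℤ),
      ∃ k' : Fin 2 → ℤ, F (x + fun i => (k i : ℝ)) = F x + fun i => (k' i : ℝ))
    (L : Matrix (Fin 2) (Fin 2) ℤ)
    (hL : ∃ M : ℝ, ∀ x : Fin 2 → ℝ, ‖F x - (L.map (Int.cast : ℤ → ℝ)).mulVec x‖ ≤ M)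
    (z w : Fin 2 → ℝ)
    (horb : ∀ t : ℝ, ∃ (s : ℝ) (k : Fin 2 → ℤ),
      F (z + t • u) = w + s • v + fun i => (k i : ℝ)) :
    ∃ a b : ℝ, ¬(a = 0 ∧ b = 0) ∧
      a • (L.map (Int.cast : ℤ → ℝ)).mulVec u + b • v = 0 :=
  stmt10_general u v F hFcont L hL z w horb
end

section
/- Let Φ be a linear flow on X generated by A (Φ(t,x) = exp(tA)x) with A = aI + J where a ∈ ℝ, a ≠ 0, and J the nilpotent Jordan block of size dim X. Then the core C(Φ,X) = {0}; that is, if there exist sequences t_n with a·t_n → +∞ and x_n → x such that (exp(t_n A) x_n) is bounded, then x = 0. -/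
open Filter Topology
open scoped Nat NNReal

noncomputable section

abbrev jordanN (m : ℕ) : Matrix (Fin m) (Fin m) ℝ :=
  Matrix.of fun i j : Fin m => if (i : ℕ) + 1 = (j : ℕ) then (1 : ℝ) else 0

lemma jordanN_pow (m k : ℕ) :
    (jordanN m) ^ k = Matrix.of fun i j : Fin m =>
      if (i : ℕ) + k = (j : ℕ) then (1 : ℝ) else 0 := by
  induction k with
  | zero =>
      ext i j
      simp [Matrix.one_apply, Fin.ext_iff]
  | succ k ih =>
      ext i j
      rw [pow_succ, Matrix.mul_apply]
      simp only [ih, Matrix.of_apply, jordanN]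
      by_cases h : (i : ℕ) + (k + 1) = (j : ℕ)
      · have hk : (i : ℕ) + k < m := by have := j.isLt; omega
        rw [Finset.sum_eq_single (⟨(i : ℕ) + k, hk⟩ : Fin m)]
        · rw [if_pos rfl,
            if_pos (show ((⟨(i : ℕ) + k, hk⟩ : Fin m) : ℕ) + 1 = (j : ℕ) by simpa using by omega),
            one_mul, if_pos h]
        · intro l _ hl
          rw [if_neg, zero_mul]
          intro hc
          exact hl (Fin.ext hc.symm)
        · simp
      · rw [if_neg h]
        apply Finset.sum_eq_zero
        intro l _
        by_cases h1 : (i : ℕ) + k = (l : ℕ)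
        · rw [if_pos h1, if_neg (by omega), mul_zero]
        · rw [if_neg h1, zero_mul]

lemma jordanN_pow_self (m : ℕ) : (jordanN m) ^ m = 0 := by
  ext i j
  rw [jordanN_pow]
  simp only [Matrix.of_apply, Matrix.zero_apply]
  rw [if_neg]
  have := j.isLt; omega

lemma norm_jordanN_pow_le (m k : ℕ) :
    letI : NormedAddCommGroup (Matrix (Fin m) (Fin m) ℝ) := Matrix.linftyOpNormedAddCommGroup
    ‖(jordanN m) ^ k‖ ≤ 1 := by
  letI : NormedAddCommGroup (Matrix (Fin m) (Fin m) ℝ) := Matrix.linftyOpNormedAddCommGroup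
  have : ‖(jordanN m) ^ k‖₊ ≤ 1 := by
    rw [Matrix.linfty_opNNNorm_def]
    apply Finset.sup_le
    intro i _
    rw [jordanN_pow]
    calc ∑ j : Fin m, ‖Matrix.of (fun i j : Fin m =>
            if (i : ℕ) + k = (j : ℕ) then (1 : ℝ) else 0) i j‖₊
        = ∑ j : Fin m, if (i : ℕ) + k = (j : ℕ) then (1 : ℝ≥0) else 0 := by
          apply Finset.sum_congr rfl
          intro j _
          simp only [Matrix.of_apply, apply_ite (‖·‖₊), nnnorm_one, nnnorm_zero]
      _ = ((Finset.univ.filter fun j : Fin m => (i : ℕ) + k = (j : ℕ)).card : ℝ≥0) := by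
          rw [Finset.sum_boole]
      _ ≤ 1 := by
          have : (Finset.univ.filter fun j : Fin m => (i : ℕ) + k = (j : ℕ)).card ≤ 1 := by
            apply Finset.card_le_one.mpr
            intro p hp q hq
            simp only [Finset.mem_filter] at hp hq
            exact Fin.ext (by omega)
          exact_mod_cast this
  exact_mod_cast this

/-- Let `Φ(t,x) = exp(tA) x` on `ℝ^m` with `A = a I + J`, `a ≠ 0`, `J`
the nilpotent single Jordan block. If there are sequences `t_n` with `a·t_n → +∞`
and `x_n → x` such that `(exp(t_n A) x_n)` is bounded, then `x = 0` (so the core of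
`Φ` is `{0}`). -/
theorem stmt11 (m : ℕ) (a : ℝ) (ha : a ≠ 0)
    (A : Matrix (Fin m) (Fin m) ℝ)
    (hA : A = a • (1 : Matrix (Fin m) (Fin m) ℝ) +
      Matrix.of fun i j : Fin m => if (i : ℕ) + 1 = (j : ℕ) then (1 : ℝ) else 0)
    (x : Fin m → ℝ) (t : ℕ → ℝ) (u : ℕ → Fin m → ℝ)
    (ht : Tendsto (fun n => a * t n) atTop atTop)
    (hu : Tendsto u atTop (𝓝 x))
    (hbdd : ∃ M : ℝ, ∀ n, ‖(NormedSpace.exp (t n • A)).mulVec (u n)‖ ≤ M) :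
    x = 0 := by
  letI : SeminormedRing (Matrix (Fin m) (Fin m) ℝ) := Matrix.linftyOpSemiNormedRing
  letI : NormedRing (Matrix (Fin m) (Fin m) ℝ) := Matrix.linftyOpNormedRing
  letI : NormedAlgebra ℝ (Matrix (Fin m) (Fin m) ℝ) := Matrix.linftyOpNormedAlgebra
  obtain ⟨M, hM⟩ := hbdd
  set N : Matrix (Fin m) (Fin m) ℝ := jordanN m with hN
  -- key decomposition
  have key : ∀ s : ℝ, NormedSpace.exp (s • A) =
      Real.exp (s * a) • NormedSpace.exp (s • N) := by
    intro s
    have hsA : s • A = algebraMap ℝ (Matrix (Fin m) (Fin m) ℝ) (s * a) + s • N := by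
      rw [hA, Algebra.algebraMap_eq_smul_one, smul_add, smul_smul, mul_comm]
    rw [hsA, Matrix.exp_add_of_commute _ _ (Algebra.commutes (s * a) (s • N))]
    erw [← NormedSpace.algebraMap_exp_comm (𝕂 := ℝ) (s * a)]
    rw [← Real.exp_eq_exp_ℝ,
      Algebra.algebraMap_eq_smul_one, smul_mul_assoc, one_mul]
  -- exp of nilpotent part bound
  have expN_bound : ∀ s : ℝ, ‖NormedSpace.exp (s • N)‖ ≤
      ∑ k ∈ Finset.range m, ((k ! : ℝ)⁻¹ * |s| ^ k) := by
    intro s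
    simp only [NormedSpace.exp_eq_tsum ℝ]
    have hzero : ∀ k ∉ Finset.range m, ((k ! : ℝ)⁻¹ • (s • N) ^ k) = 0 := by
      intro k hk
      rw [Finset.mem_range, not_lt] at hk
      rw [smul_pow, pow_eq_zero_of_le hk (jordanN_pow_self m), smul_zero, smul_zero]
    rw [tsum_eq_sum hzero]
    refine (norm_sum_le _ _).trans (Finset.sum_le_sum fun k _ => ?_)
    rw [smul_pow, norm_smul, norm_smul]
    have h1 : ‖N ^ k‖ ≤ 1 := norm_jordanN_pow_le m k
    calc ‖(k ! : ℝ)⁻¹‖ * (‖s ^ k‖ * ‖N ^ k‖)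
        ≤ ‖(k ! : ℝ)⁻¹‖ * (‖s ^ k‖ * 1) :=
          mul_le_mul_of_nonneg_left
            (mul_le_mul_of_nonneg_left h1 (norm_nonneg _)) (norm_nonneg _)
      _ = (k ! : ℝ)⁻¹ * |s| ^ k := by
          rw [mul_one, Real.norm_eq_abs, Real.norm_eq_abs, abs_pow,
            abs_of_nonneg (by positivity)]
  -- inverse relation
  have hinv : ∀ s : ℝ, NormedSpace.exp (-(s • A)) * NormedSpace.exp (s • A) = 1 := by
    intro s
    rw [← Matrix.exp_add_of_commute _ _ (Commute.neg_left (Commute.refl (s • A))),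
      neg_add_cancel, NormedSpace.exp_zero]
  -- the decay coefficient
  set c : ℕ → ℝ := fun n => ∑ k ∈ Finset.range m,
    ((k ! : ℝ)⁻¹ * (|t n| ^ k * Real.exp (-(a * t n)))) with hc
  have hub : ∀ n, ‖u n‖ ≤ c n * M := by
    intro n
    have h1 : u n = (NormedSpace.exp (-(t n • A))).mulVec
        ((NormedSpace.exp (t n • A)).mulVec (u n)) := by
      rw [Matrix.mulVec_mulVec, hinv, Matrix.one_mulVec]
    have h2 : ‖u n‖ ≤ ‖NormedSpace.exp (-(t n • A))‖ *
        ‖(NormedSpace.exp (t n • A)).mulVec (u n)‖ := by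
      conv_lhs => rw [h1]
      exact Matrix.linfty_opNorm_mulVec _ _
    have h3 : ‖NormedSpace.exp (-(t n • A))‖ ≤ c n := by
      rw [← neg_smul, key, norm_smul, Real.norm_eq_abs, Real.abs_exp]
      calc Real.exp (-t n * a) * ‖NormedSpace.exp ((-t n) • N)‖
          ≤ Real.exp (-t n * a) * ∑ k ∈ Finset.range m, ((k ! : ℝ)⁻¹ * |(-t n)| ^ k) :=
            mul_le_mul_of_nonneg_left (expN_bound _) (Real.exp_nonneg _)
        _ = c n := by
            rw [hc, Finset.mul_sum]
            apply Finset.sum_congr rfl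
            intro k _
            rw [abs_neg]
            have : -t n * a = -(a * t n) := by ring
            rw [this]; ring
    calc ‖u n‖ ≤ ‖NormedSpace.exp (-(t n • A))‖ *
          ‖(NormedSpace.exp (t n • A)).mulVec (u n)‖ := h2
      _ ≤ c n * M := mul_le_mul h3 (hM n) (norm_nonneg _)
          (le_trans (norm_nonneg _) h3)
  -- c n → 0
  have hc0 : Tendsto c atTop (𝓝 0) := by
    rw [hc]
    have : (0 : ℝ) = ∑ k ∈ Finset.range m, ((k ! : ℝ)⁻¹ * 0) := by simp
    rw [this]
    apply tendsto_finset_sum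
    intro k _
    apply Tendsto.const_mul
    have hpos : ∀ᶠ n in atTop, 0 ≤ a * t n := ht.eventually_ge_atTop 0
    have hcomp : Tendsto (fun n => (a * t n) ^ k * Real.exp (-(a * t n))) atTop (𝓝 0) :=
      (Real.tendsto_pow_mul_exp_neg_atTop_nhds_zero k).comp ht
    have heq : (fun n => |t n| ^ k * Real.exp (-(a * t n))) =ᶠ[atTop]
        fun n => (|a|⁻¹) ^ k * ((a * t n) ^ k * Real.exp (-(a * t n))) := by
      filter_upwards [hpos] with n hn
      have h1 : |t n| = |a|⁻¹ * (a * t n) := by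
        rw [← abs_of_nonneg hn, abs_mul, ← mul_assoc, inv_mul_cancel₀ (abs_ne_zero.mpr ha),
          one_mul]
      rw [h1, mul_pow]
      ring
    rw [tendsto_congr' heq]
    have := hcomp.const_mul ((|a|⁻¹) ^ k)
    simpa using this
  -- conclude
  have hnorm : Tendsto (fun n => ‖u n‖) atTop (𝓝 0) := by
    apply squeeze_zero (fun n => norm_nonneg _) hub
    have := hc0.mul_const M
    simpa using this
  have hnx : Tendsto (fun n => ‖u n‖) atTop (𝓝 ‖x‖) := hu.norm
  have : ‖x‖ = 0 := tendsto_nhds_unique hnx hnorm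
  exact norm_eq_zero.mp this
end
end

section
/- Let Φ be the linear flow on ℝ^{2d+1} generated by the nilpotent Jordan block J_{2d+1} (d ∈ ℕ). Then C₀*(Φ,X) = C₀(Φ,X) = span{e_1,…,e_d} and C*(Φ,X) = C(Φ,X) = span{e_1,…,e_{d+1}}. -/
/-!
Identify `x ∈ ℝ^{D+1}` with the polynomial `P_x = ∑ xᵢ Xⁱ / i!` of degree `≤ D`. Then `Φ(t) x` is
the jet `(P_x(t), P_x'(t), …, P_x^{(D)}(t))`: the flow translates polynomials.

Upper bounds. For `deg q ≤ D` the bilinear concomitant `∑ₖ (-1)ᵏ w^{(D-k)} q^{(k)}` of `q` with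
`w = X^{D-l} (X - τ)^l` is constant, and comparing its values at `0` and `τ` gives
`∑_{k ≤ l} C(l,k) (D-k)! τᵏ q^{(k)}(0) = ∑_{k ≤ D-l} (-1)ᵏ C(D-l,k) (D-k)! τᵏ q^{(k)}(τ)`.
Divide by `τ^l`. If the jets of `q` at `0` converge to those of `P_x`, and its jets at `τ → ±∞`
are bounded by `M` with `M τ^{D-2l} → 0`, then `x_l = 0`. For bounded orbits this holds when
`2l > D`; for orbits tending to `0`, when `2l ≥ D`.

Lower bounds. If `deg P_x < K`, the polynomials `P_x (1 - X/t)^{D+1-K}` have jets at `0` tending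
to `x`, and their jets at `t` are `O(|t|^{2K-2-D})`.
-/

open Filter Topology

/-- The linear flow on `ℝ^m` generated by the nilpotent single Jordan block `J_m`. -/
noncomputable def jordanFlow (m : ℕ) (t : ℝ) (x : Fin m → ℝ) : Fin m → ℝ :=
  (NormedSpace.exp
    (t • (Matrix.of fun i j : Fin m => if (i : ℕ) + 1 = (j : ℕ) then (1 : ℝ) else 0))).mulVec x

/-- The core `C(Φ, ℝ^m)` of the Jordan flow. -/
def jordanCoreC (m : ℕ) : Set (Fin m → ℝ) :=
  {x | ∃ (tp tm : ℕ → ℝ) (up um : ℕ → Fin m → ℝ),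
    Tendsto tp atTop atTop ∧ Tendsto tm atTop atBot ∧
    Tendsto up atTop (𝓝 x) ∧ Tendsto um atTop (𝓝 x) ∧
    (∃ M : ℝ, ∀ n, ‖jordanFlow m (tp n) (up n)‖ ≤ M) ∧
    (∃ M : ℝ, ∀ n, ‖jordanFlow m (tm n) (um n)‖ ≤ M)}

/-- The `(0,0)`-core `C₀(Φ, ℝ^m)` of the Jordan flow. -/
def jordanCoreC0 (m : ℕ) : Set (Fin m → ℝ) :=
  {x | ∃ (tp tm : ℕ → ℝ) (up um : ℕ → Fin m → ℝ),
    Tendsto tp atTop atTop ∧ Tendsto tm atTop atBot ∧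
    Tendsto up atTop (𝓝 x) ∧ Tendsto um atTop (𝓝 x) ∧
    Tendsto (fun n => jordanFlow m (tp n) (up n)) atTop (𝓝 0) ∧
    Tendsto (fun n => jordanFlow m (tm n) (um n)) atTop (𝓝 0)}

/-- The uniform core `C*(Φ, ℝ^m)` of the Jordan flow. -/
def jordanCoreCstar (m : ℕ) : Set (Fin m → ℝ) :=
  {x | ∀ t : ℕ → ℝ, Tendsto (fun n => |t n|) atTop atTop →
    ∃ u : ℕ → Fin m → ℝ, Tendsto u atTop (𝓝 x) ∧
      ∃ M : ℝ, ∀ n, ‖jordanFlow m (t n) (u n)‖ ≤ M}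

/-- The uniform `(0,0)`-core `C₀*(Φ, ℝ^m)` of the Jordan flow. -/
def jordanCoreC0star (m : ℕ) : Set (Fin m → ℝ) :=
  {x | ∀ t : ℕ → ℝ, Tendsto (fun n => |t n|) atTop atTop →
    ∃ u : ℕ → Fin m → ℝ, Tendsto u atTop (𝓝 x) ∧
      Tendsto (fun n => jordanFlow m (t n) (u n)) atTop (𝓝 0)}

open Filter Topology Polynomial Finset Asymptotics
open scoped Nat Matrix

namespace Polynomial

theorem iterate_derivative_eval_eq_factorial_mul_coeff_taylor {R : Type*} [CommSemiring R]
    (f : R[X]) (r : R) (k : ℕ) :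
    (derivative^[k] f).eval r = k ! * (taylor r f).coeff k := by
  rw [taylor_coeff, ← factorial_smul_hasseDeriv, LinearMap.smul_apply, eval_smul, nsmul_eq_mul]

theorem eval_add_eq_sum_range_iterate_derivative {K : Type*} [Field K] [CharZero K] {f : K[X]}
    {n : ℕ} (hf : f.natDegree < n) (a t : K) :
    f.eval (a + t) = ∑ k ∈ range n, (derivative^[k] f).eval a * t ^ k / k ! := by
  rw [add_comm, ← taylor_eval, eval_eq_sum_range' (by rwa [natDegree_taylor])]
  refine sum_congr rfl fun k _ => ?_
  rw [iterate_derivative_eval_eq_factorial_mul_coeff_taylor, mul_assoc,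
    mul_div_cancel_left₀ _ (Nat.cast_ne_zero.mpr k.factorial_ne_zero), mul_comm]

theorem taylor_mul_one_sub_C_inv_mul_X_pow {K : Type*} [Field K] (p : K[X]) (e : ℕ) {t : K}
    (ht : t ≠ 0) :
    taylor t (p * (1 - C t⁻¹ * X) ^ e) = C ((-t⁻¹) ^ e) * (X ^ e * taylor t p) := by
  have h : taylor t (1 - C t⁻¹ * X) = C (-t⁻¹) * X := by
    rw [map_sub, taylor_one, taylor_mul, taylor_C, taylor_X, mul_add, ← C_mul,
      inv_mul_cancel₀ ht, C_1, C_neg]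
    ring
  rw [taylor_mul, taylor_pow, h, mul_pow, C_pow]
  ring

theorem exists_abs_eval_le {q : ℝ[X]} {N : ℕ} (hq : q.natDegree ≤ N) :
    ∃ C, 0 ≤ C ∧ ∀ x : ℝ, 1 ≤ |x| → |q.eval x| ≤ C * |x| ^ N := by
  refine ⟨∑ i ∈ range (N + 1), |q.coeff i|, sum_nonneg fun _ _ => abs_nonneg _, fun x hx => ?_⟩
  rw [eval_eq_sum_range' (Nat.lt_succ_of_le hq), sum_mul]
  refine (abs_sum_le_sum_abs _ _).trans (sum_le_sum fun i hi => ?_)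
  rw [abs_mul, abs_pow]
  exact mul_le_mul_of_nonneg_left (pow_le_pow_right₀ hx (Nat.lt_succ_iff.mp (mem_range.mp hi)))
    (abs_nonneg _)

section BilinearConcomitant

variable {R : Type*} [CommRing R]

noncomputable def bilinearConcomitant (D : ℕ) (w q : R[X]) : R[X] :=
  ∑ k ∈ range (D + 1), (-1) ^ k * (derivative^[D - k] w * derivative^[k] q)

theorem derivative_bilinearConcomitant (D : ℕ) (w q : R[X]) :
    derivative (bilinearConcomitant D w q) =
      derivative^[D + 1] w * q + (-1) ^ D * (w * derivative^[D + 1] q) := by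
  set f : ℕ → R[X] := fun k => (-1) ^ k * (derivative^[D + 1 - k] w * derivative^[k] q)
  have hterm : ∀ k ∈ range (D + 1),
      derivative ((-1) ^ k * (derivative^[D - k] w * derivative^[k] q)) = f k - f (k + 1) := by
    intro k hk
    have hk : D + 1 - k = D - k + 1 := by rw [mem_range] at hk; omega
    simp only [f, hk, Nat.add_sub_add_right, Function.iterate_succ_apply', derivative_mul,
      derivative_pow, derivative_neg, derivative_one]
    ring
  rw [bilinearConcomitant, derivative_sum, sum_congr rfl hterm, sum_range_sub']
  simp only [f, Nat.sub_zero, pow_zero, one_mul, Nat.sub_self, Function.iterate_zero, id, pow_succ]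
  ring

theorem eval_bilinearConcomitant_eq [IsAddTorsionFree R] {D : ℕ} {w q : R[X]}
    (hw : w.natDegree ≤ D) (hq : q.natDegree ≤ D) (a b : R) :
    (bilinearConcomitant D w q).eval a = (bilinearConcomitant D w q).eval b := by
  have h : derivative (bilinearConcomitant D w q) = 0 := by
    rw [derivative_bilinearConcomitant, iterate_derivative_eq_zero (p := w) (by omega),
      iterate_derivative_eq_zero (p := q) (by omega)]
    ring
  rw [eq_C_of_derivative_eq_zero h, eval_C, eval_C]

theorem eval_zero_iterate_derivative_X_pow_mul_X_sub_C_pow {D l k : ℕ} (hl : l ≤ D)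
    (hk : k ≤ D) (τ : R) :
    (derivative^[D - k] (X ^ (D - l) * (X - C τ) ^ l)).eval 0 =
      (D - k)! * l.choose k * (-τ) ^ k := by
  rw [iterate_derivative_eval_eq_factorial_mul_coeff_taylor, taylor_zero, coeff_X_pow_mul',
    sub_eq_add_neg, ← C_neg]
  split_ifs with hkl
  · rw [coeff_X_add_C_pow, show l - (D - k - (D - l)) = k by omega,
      show D - k - (D - l) = l - k by omega, Nat.choose_symm (by omega)]
    ring
  · rw [Nat.choose_eq_zero_of_lt (by omega)]
    simp

theorem eval_iterate_derivative_X_pow_mul_X_sub_C_pow_self {D l k : ℕ} (hl : l ≤ D)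
    (hk : k ≤ D) (τ : R) :
    (derivative^[D - k] (X ^ (D - l) * (X - C τ) ^ l)).eval τ =
      (D - k)! * (D - l).choose k * τ ^ k := by
  rw [iterate_derivative_eval_eq_factorial_mul_coeff_taylor]
  simp only [taylor_mul, taylor_pow, taylor_X, map_sub, taylor_C, add_sub_cancel_right,
    coeff_mul_X_pow']
  split_ifs with hkl
  · rw [coeff_X_add_C_pow, show D - l - (D - k - l) = k by omega,
      Nat.choose_symm_of_eq_add (show D - l = D - k - l + k by omega)]
    ring
  · rw [Nat.choose_eq_zero_of_lt (by omega)]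
    simp

theorem sum_choose_mul_iterate_derivative_eval_zero_eq [IsAddTorsionFree R] {D l : ℕ}
    (hl : l ≤ D) {q : R[X]} (hq : q.natDegree ≤ D) (τ : R) :
    ∑ k ∈ range (l + 1), ((l.choose k : R) * (D - k)!) * τ ^ k * (derivative^[k] q).eval 0 =
      ∑ k ∈ range (D - l + 1),
        (-1) ^ k * (((D - l).choose k : R) * (D - k)!) * τ ^ k * (derivative^[k] q).eval τ := by
  have hw : (X ^ (D - l) * (X - C τ) ^ l).natDegree ≤ D := by
    refine natDegree_mul_le.trans ?_
    have := natDegree_pow_le_of_le l (natDegree_X_sub_C_le (r := τ))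
    have := natDegree_X_pow_le (R := R) (D - l)
    omega
  have key := eval_bilinearConcomitant_eq hw hq 0 τ
  simp only [bilinearConcomitant, eval_finsetSum, eval_mul, eval_pow, eval_neg, eval_one] at key
  have hsign : ∀ k, (-1 : R) ^ k * (-τ) ^ k = τ ^ k := fun k => by rw [← mul_pow]; simp
  calc _ = ∑ k ∈ range (D + 1), (l.choose k : R) * (D - k)! * τ ^ k * (derivative^[k] q).eval 0 :=
        sum_subset (range_subset_range.mpr (by omega)) fun k _ hk => by
          rw [Nat.choose_eq_zero_of_lt (by simpa using hk)]; simp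
    _ = _ := sum_congr rfl fun k hk => by
          rw [eval_zero_iterate_derivative_X_pow_mul_X_sub_C_pow hl
            (by simpa [Nat.lt_succ_iff] using hk)]
          linear_combination (-((D - k)! * (l.choose k : R)) * (derivative^[k] q).eval 0) *
            hsign k
    _ = _ := key
    _ = ∑ k ∈ range (D + 1), (-1) ^ k * (((D - l).choose k : R) * (D - k)!) * τ ^ k *
          (derivative^[k] q).eval τ :=
        sum_congr rfl fun k hk => by
          rw [eval_iterate_derivative_X_pow_mul_X_sub_C_pow_self hl
            (by simpa [Nat.lt_succ_iff] using hk)]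
          ring
    _ = _ := (sum_subset (range_subset_range.mpr (by omega)) fun k _ hk => by
          rw [Nat.choose_eq_zero_of_lt (by simpa using hk)]; simp).symm

end BilinearConcomitant

end Polynomial

section PowDivPow

variable {τ : ℕ → ℝ} (c : ℕ → ℝ)

theorem tendsto_sum_range_mul_pow_div_pow {l : ℕ} {a : ℕ → ℕ → ℝ} {α : ℕ → ℝ}
    (hτ : Tendsto (fun n => |τ n|) atTop atTop)
    (ha : ∀ k ≤ l, Tendsto (fun n => a n k) atTop (𝓝 (α k))) :
    Tendsto (fun n => (∑ k ∈ range (l + 1), c k * τ n ^ k * a n k) / τ n ^ l) atTop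
      (𝓝 (c l * α l)) := by
  simp only [sum_range_succ, add_div, sum_div]
  rw [← zero_add (c l * α l)]
  refine Tendsto.add ?_ ?_
  · have h := tendsto_finsetSum (range l) (f := fun k n => c k * τ n ^ k * a n k / τ n ^ l)
      (a := fun _ => (0 : ℝ)) fun k hk => by
        have hkl : k < l := mem_range.mp hk
        have hpow : Tendsto (fun n => τ n ^ k / τ n ^ l) atTop (𝓝 0) := by
          rw [tendsto_zero_iff_norm_tendsto_zero]
          simpa only [norm_div, norm_pow, Real.norm_eq_abs, Function.comp_def] using
            (tendsto_pow_div_pow_atTop_zero hkl).comp hτ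
        simpa [mul_right_comm _ (τ _ ^ k), mul_div_assoc] using
          ((ha k hkl.le).const_mul (c k)).mul hpow
    simpa using h
  · refine ((ha l le_rfl).const_mul (c l)).congr' ?_
    filter_upwards [hτ.eventually_ge_atTop 1] with n hn
    have hτ0 : τ n ^ l ≠ 0 := pow_ne_zero _ (abs_pos.mp (one_pos.trans_le hn))
    field_simp

theorem tendsto_sum_range_mul_pow_div_pow_zero {N l : ℕ} {b : ℕ → ℕ → ℝ} {M : ℕ → ℝ}
    (hτ : Tendsto (fun n => |τ n|) atTop atTop) (hb : ∀ n, ∀ k ≤ N, |b n k| ≤ M n)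
    (hMτ : Tendsto (fun n => M n * |τ n| ^ N / |τ n| ^ l) atTop (𝓝 0)) :
    Tendsto (fun n => (∑ k ∈ range (N + 1), c k * τ n ^ k * b n k) / τ n ^ l) atTop (𝓝 0) := by
  simp only [sum_div]
  have h := tendsto_finsetSum (range (N + 1)) (f := fun k n => c k * τ n ^ k * b n k / τ n ^ l)
    (a := fun _ => (0 : ℝ)) fun k hk => by
      have hk : k ≤ N := Nat.lt_succ_iff.mp (mem_range.mp hk)
      have hbound := hMτ.const_mul |c k|
      rw [mul_zero] at hbound
      refine squeeze_zero_norm' ?_ hbound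
      filter_upwards [hτ.eventually_ge_atTop 1] with n hn
      calc ‖c k * τ n ^ k * b n k / τ n ^ l‖ = |c k| * (|τ n| ^ k * |b n k| / |τ n| ^ l) := by
            rw [norm_div, norm_mul, norm_mul, norm_pow, norm_pow, Real.norm_eq_abs,
              Real.norm_eq_abs, Real.norm_eq_abs]
            ring
        _ ≤ |c k| * (M n * |τ n| ^ N / |τ n| ^ l) := by
            refine mul_le_mul_of_nonneg_left (div_le_div_of_nonneg_right ?_ (by positivity))
              (abs_nonneg _)
            rw [mul_comm (M n)]
            exact mul_le_mul (pow_le_pow_right₀ hn hk) (hb n k hk) (abs_nonneg _) (by positivity)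
  simpa using h

end PowDivPow

namespace Polynomial

theorem iterate_derivative_eval_zero_eq_zero_of_tendsto {D l : ℕ} (hl : l ≤ D) {P : ℝ[X]}
    {q : ℕ → ℝ[X]} {τ M : ℕ → ℝ} (hq : ∀ n, (q n).natDegree ≤ D)
    (hτ : Tendsto (fun n => |τ n|) atTop atTop)
    (h0 : ∀ k ≤ D, Tendsto (fun n => (derivative^[k] (q n)).eval 0) atTop
      (𝓝 ((derivative^[k] P).eval 0)))
    (hM : ∀ n, ∀ k ≤ D, |(derivative^[k] (q n)).eval (τ n)| ≤ M n)
    (hMτ : Tendsto (fun n => M n * |τ n| ^ (D - l) / |τ n| ^ l) atTop (𝓝 0)) :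
    (derivative^[l] P).eval 0 = 0 := by
  set c : ℕ → ℝ := fun k => (l.choose k : ℝ) * (D - k)!
  have hlim0 := tendsto_sum_range_mul_pow_div_pow c hτ fun k hk => h0 k (hk.trans hl)
  have hlimτ := tendsto_sum_range_mul_pow_div_pow_zero
    (fun k => (-1) ^ k * (((D - l).choose k : ℝ) * (D - k)!)) (N := D - l) hτ
    (fun n k hk => hM n k (by omega)) hMτ
  simp only [← sum_choose_mul_iterate_derivative_eval_zero_eq hl (hq _)] at hlimτ
  have hcl : c l ≠ 0 := by simp [c, Nat.factorial_ne_zero]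
  exact (mul_eq_zero.mp (tendsto_nhds_unique hlim0 hlimτ)).resolve_left hcl

end Polynomial

namespace JordanFlow

noncomputable def jet (m : ℕ) (p : ℝ[X]) (a : ℝ) : Fin m → ℝ :=
  fun i => (derivative^[i] p).eval a

noncomputable def jetPoly {m : ℕ} (v : Fin m → ℝ) : ℝ[X] :=
  ∑ i, C (v i / (i : ℕ)!) * X ^ (i : ℕ)

theorem jet_zero (m : ℕ) (a : ℝ) : jet m 0 a = 0 := by
  funext i
  simp [jet]

theorem jet_jetPoly {m : ℕ} (v : Fin m → ℝ) : jet m (jetPoly v) 0 = v := by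
  funext i
  simp only [jet, iterate_derivative_eval_eq_factorial_mul_coeff_taylor, taylor_zero, jetPoly,
    finsetSum_coeff, coeff_C_mul_X_pow, Fin.val_inj, sum_ite_eq, mem_univ, if_true]
  exact mul_div_cancel₀ _ (Nat.cast_ne_zero.mpr (Nat.factorial_ne_zero _))

theorem natDegree_jetPoly_le {D : ℕ} (v : Fin (D + 1) → ℝ) : (jetPoly v).natDegree ≤ D :=
  natDegree_sum_le_of_forall_le _ _ fun i _ =>
    (natDegree_C_mul_X_pow_le _ _).trans (Nat.lt_succ_iff.mp i.isLt)

theorem degree_jetPoly_lt {m K : ℕ} {v : Fin m → ℝ} (hv : ∀ i : Fin m, K ≤ i → v i = 0) :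
    (jetPoly v).degree < K := by
  rw [degree_lt_iff_coeff_zero]
  intro j hj
  simp only [jetPoly, finsetSum_coeff, coeff_C_mul_X_pow]
  refine sum_eq_zero fun i _ => ?_
  split_ifs with h
  · rw [hv i (h ▸ hj), zero_div]
  · rfl

def jordanBlock (m : ℕ) : Matrix (Fin m) (Fin m) ℝ :=
  Matrix.of fun i j : Fin m => if (i : ℕ) + 1 = (j : ℕ) then (1 : ℝ) else 0

theorem jordanBlock_mulVec_jet {m : ℕ} {p : ℝ[X]} (hp : p.natDegree < m) (a : ℝ) :
    jordanBlock m *ᵥ jet m p a = jet m (derivative p) a := by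
  funext i
  simp only [Matrix.mulVec, dotProduct, jordanBlock, Matrix.of_apply, jet, ite_mul, one_mul,
    zero_mul]
  rw [Fin.sum_univ_eq_sum_range (fun j => if (i : ℕ) + 1 = j then (derivative^[j] p).eval a else 0),
    sum_ite_eq, ← Function.iterate_succ_apply]
  split_ifs with h
  · rfl
  · rw [iterate_derivative_eq_zero (by simp only [mem_range] at h; omega), eval_zero]

theorem jordanBlock_pow_mulVec_jet {m : ℕ} {p : ℝ[X]} (hp : p.natDegree < m) (n : ℕ) (a : ℝ) :
    jordanBlock m ^ n *ᵥ jet m p a = jet m (derivative^[n] p) a := by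
  induction n with
  | zero => simp
  | succ n ih =>
    rw [pow_succ', ← Matrix.mulVec_mulVec, ih, Function.iterate_succ_apply',
      jordanBlock_mulVec_jet ((natDegree_iterate_derivative p n).trans_lt (by omega))]

theorem jordanBlock_pow_eq_zero (D : ℕ) : jordanBlock (D + 1) ^ (D + 1) = 0 := by
  rw [Matrix.ext_iff_mulVec]
  intro v
  have hv := Nat.lt_succ_of_le (natDegree_jetPoly_le v)
  rw [← jet_jetPoly v, jordanBlock_pow_mulVec_jet hv, iterate_derivative_eq_zero hv, jet_zero,
    Matrix.zero_mulVec]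

theorem exp_smul_jordanBlock (D : ℕ) (t : ℝ) :
    NormedSpace.exp (t • jordanBlock (D + 1)) =
      ∑ n ∈ range (D + 1), (t ^ n / n !) • jordanBlock (D + 1) ^ n := by
  rw [congrFun (NormedSpace.exp_eq_tsum ℝ), tsum_eq_sum (s := range (D + 1))]
  · refine sum_congr rfl fun n _ => ?_
    rw [_root_.smul_pow, smul_smul, div_eq_inv_mul]
  · intro n hn
    rw [_root_.smul_pow, pow_eq_zero_of_le (by simpa using hn) (jordanBlock_pow_eq_zero D),
      smul_zero, smul_zero]

theorem jordanFlow_jet {D : ℕ} {p : ℝ[X]} (hp : p.natDegree ≤ D) (t a : ℝ) :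
    jordanFlow (D + 1) t (jet (D + 1) p a) = jet (D + 1) p (a + t) := by
  have hp' : p.natDegree < D + 1 := Nat.lt_succ_of_le hp
  funext i
  change (NormedSpace.exp (t • jordanBlock (D + 1)) *ᵥ jet (D + 1) p a) i = _
  rw [exp_smul_jordanBlock, Matrix.sum_mulVec, Finset.sum_apply, jet,
    eval_add_eq_sum_range_iterate_derivative (n := D + 1)
      ((natDegree_iterate_derivative p i).trans_lt (by omega))]
  refine sum_congr rfl fun n _ => ?_
  rw [Matrix.smul_mulVec, jordanBlock_pow_mulVec_jet hp', Pi.smul_apply, smul_eq_mul, jet,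
    ← Function.iterate_add_apply, ← Function.iterate_add_apply, add_comm]
  ring

theorem jordanFlow_eq_jet_jetPoly {D : ℕ} (t : ℝ) (v : Fin (D + 1) → ℝ) :
    jordanFlow (D + 1) t v = jet (D + 1) (jetPoly v) t := by
  conv_lhs => rw [← jet_jetPoly v]
  rw [jordanFlow_jet (natDegree_jetPoly_le v), zero_add]

theorem apply_eq_zero_of_tendsto_of_norm_jordanFlow_le {D : ℕ} {x : Fin (D + 1) → ℝ}
    {u : ℕ → Fin (D + 1) → ℝ} {t M : ℕ → ℝ} (hu : Tendsto u atTop (𝓝 x))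
    (ht : Tendsto (fun n => |t n|) atTop atTop)
    (hM : ∀ n, ‖jordanFlow (D + 1) (t n) (u n)‖ ≤ M n) (l : Fin (D + 1))
    (hMt : Tendsto (fun n => M n * |t n| ^ (D - l) / |t n| ^ (l : ℕ)) atTop (𝓝 0)) :
    x l = 0 := by
  have hjet0 : ∀ (v : Fin (D + 1) → ℝ) (k : Fin (D + 1)),
      (derivative^[k] (jetPoly v)).eval 0 = v k := fun v => congrFun (jet_jetPoly v)
  have key := iterate_derivative_eval_zero_eq_zero_of_tendsto (Nat.lt_succ_iff.mp l.isLt)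
    (P := jetPoly x) (q := fun n => jetPoly (u n)) (fun n => natDegree_jetPoly_le _) ht
    (fun k hk => by
      simpa only [hjet0 _ ⟨k, Nat.lt_succ_of_le hk⟩] using
        tendsto_pi_nhds.mp hu ⟨k, Nat.lt_succ_of_le hk⟩)
    (fun n k hk => by
      have h := (norm_le_pi_norm (jordanFlow (D + 1) (t n) (u n)) ⟨k, Nat.lt_succ_of_le hk⟩).trans
        (hM n)
      rw [jordanFlow_eq_jet_jetPoly] at h
      exact (Real.norm_eq_abs _).symm.trans_le h)
    hMt
  rwa [hjet0] at key

theorem tendsto_jet_zero_mul_one_sub_C_mul_X_pow (m : ℕ) (p : ℝ[X]) (e : ℕ) :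
    Tendsto (fun s => jet m (p * (1 - C s * X) ^ e) 0) (𝓝 0) (𝓝 (jet m p 0)) := by
  rw [tendsto_pi_nhds]
  intro k
  simp only [jet, iterate_derivative_eval_eq_factorial_mul_coeff_taylor, taylor_zero]
  refine Tendsto.const_mul _ ?_
  have h : ∀ s, (1 - C s * X) ^ e = ((1 - X : ℝ[X]) ^ e).comp (C s * X) := fun s => by
    simp [sub_comp]
  have hcont : Continuous fun s => (p * (1 - C s * X) ^ e).coeff k := by
    simp only [h, coeff_mul, comp_C_mul_X_coeff]
    fun_prop
  simpa using hcont.tendsto 0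

theorem exists_abs_iterate_derivative_eval_le (p : ℝ[X]) (e k : ℕ) :
    ∃ B, 0 ≤ B ∧ ∀ t : ℝ, 1 ≤ |t| →
      |(derivative^[k] (p * (1 - C t⁻¹ * X) ^ e)).eval t| ≤
        B * (|t| ^ p.natDegree / |t| ^ e) := by
  obtain ⟨B, hB0, hB⟩ := exists_abs_eval_le
    ((natDegree_hasseDeriv_le p (k - e)).trans (Nat.sub_le p.natDegree (k - e)))
  refine ⟨k ! * B, by positivity, fun t ht => ?_⟩
  have ht0 : t ≠ 0 := abs_pos.mp (one_pos.trans_le ht)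
  rw [iterate_derivative_eval_eq_factorial_mul_coeff_taylor,
    taylor_mul_one_sub_C_inv_mul_X_pow p e ht0, coeff_C_mul, coeff_X_pow_mul', taylor_coeff,
    abs_mul, abs_mul, Nat.abs_cast, abs_pow, abs_neg, abs_inv, mul_assoc _ B]
  refine mul_le_mul_of_nonneg_left ?_ (Nat.cast_nonneg _)
  have hif : |if e ≤ k then (hasseDeriv (k - e) p).eval t else 0| ≤ B * |t| ^ p.natDegree := by
    split_ifs
    · exact hB t ht
    · rw [abs_zero]
      positivity
  calc |t|⁻¹ ^ e * |if e ≤ k then (hasseDeriv (k - e) p).eval t else 0|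
      ≤ |t|⁻¹ ^ e * (B * |t| ^ p.natDegree) := by gcongr
    _ = B * (|t| ^ p.natDegree / |t| ^ e) := by rw [inv_pow]; ring

theorem exists_tendsto_isBigO_jordanFlow {D K e : ℕ} (hKe : K + e = D + 1) {p : ℝ[X]}
    (hp : p.degree < K) {t : ℕ → ℝ} (ht : Tendsto (fun n => |t n|) atTop atTop) :
    ∃ u : ℕ → Fin (D + 1) → ℝ, Tendsto u atTop (𝓝 (jet (D + 1) p 0)) ∧
      (fun n => jordanFlow (D + 1) (t n) (u n)) =O[atTop] fun n => |t n| ^ K / |t n| ^ (e + 1) := by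
  rcases eq_or_ne p 0 with rfl | hp0
  · refine ⟨0, ?_, ?_⟩
    · rw [jet_zero]
      exact tendsto_const_nhds
    · simp [jordanFlow, isBigO_zero]
  have hK : p.natDegree + 1 ≤ K := (natDegree_lt_iff_degree_lt hp0).mpr hp
  have hdeg : ∀ s : ℝ, (p * (1 - C s * X) ^ e).natDegree ≤ D := fun s => by
    refine natDegree_mul_le.trans ?_
    have : ((1 - C s * X) ^ e).natDegree ≤ e := by compute_degree
    omega
  have hinv : Tendsto (fun n => (t n)⁻¹) atTop (𝓝 0) := by
    rw [tendsto_zero_iff_norm_tendsto_zero]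
    simpa [Function.comp_def] using tendsto_inv_atTop_zero.comp ht
  refine ⟨fun n => jet (D + 1) (p * (1 - C (t n)⁻¹ * X) ^ e) 0,
    (tendsto_jet_zero_mul_one_sub_C_mul_X_pow _ p e).comp hinv, isBigO_pi.mpr fun k => ?_⟩
  obtain ⟨B, hB0, hB⟩ := exists_abs_iterate_derivative_eval_le p e k
  refine IsBigO.of_bound B ?_
  filter_upwards [ht.eventually_ge_atTop 1] with n hn
  have hpow : |t n| ^ p.natDegree / |t n| ^ e ≤ |t n| ^ K / |t n| ^ (e + 1) := by
    rw [div_le_div_iff₀ (by positivity) (by positivity), ← pow_add, ← pow_add]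
    exact pow_le_pow_right₀ hn (by omega)
  rw [jordanFlow_jet (hdeg _), zero_add, Real.norm_eq_abs, Real.norm_eq_abs,
    abs_of_nonneg (by positivity : 0 ≤ |t n| ^ K / |t n| ^ (e + 1))]
  exact (hB (t n) hn).trans (mul_le_mul_of_nonneg_left hpow hB0)

theorem jordanCoreC_subset (D : ℕ) :
    jordanCoreC (D + 1) ⊆ {x | ∀ i : Fin (D + 1), D < 2 * (i : ℕ) → x i = 0} := by
  rintro x ⟨tp, -, up, -, htp, -, hup, -, ⟨M, hM⟩, -⟩ i hi
  have ht := tendsto_abs_atTop_atTop.comp htp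
  refine apply_eq_zero_of_tendsto_of_norm_jordanFlow_le hup ht hM i ?_
  simpa [mul_div_assoc, Function.comp_def] using
    ((tendsto_pow_div_pow_atTop_zero (by omega : D - i < i)).comp ht).const_mul M

theorem jordanCoreC0_subset (D : ℕ) :
    jordanCoreC0 (D + 1) ⊆ {x | ∀ i : Fin (D + 1), D ≤ 2 * (i : ℕ) → x i = 0} := by
  rintro x ⟨tp, -, up, -, htp, -, hup, -, hflow, -⟩ i hi
  have ht := tendsto_abs_atTop_atTop.comp htp
  refine apply_eq_zero_of_tendsto_of_norm_jordanFlow_le hup ht (fun n => le_rfl) i ?_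
  refine squeeze_zero' (Eventually.of_forall fun n => by positivity) ?_
    (tendsto_zero_iff_norm_tendsto_zero.mp hflow)
  filter_upwards [ht.eventually_ge_atTop 1] with n hn
  rw [mul_div_assoc]
  refine mul_le_of_le_one_right (norm_nonneg _) ?_
  rw [div_le_one (by positivity)]
  exact pow_le_pow_right₀ hn (by omega)

theorem subset_jordanCoreC0star (D : ℕ) :
    {x | ∀ i : Fin (D + 1), D ≤ 2 * (i : ℕ) → x i = 0} ⊆ jordanCoreC0star (D + 1) := by
  intro x hx t ht
  -- `K = ⌈D/2⌉`, so that the orbit decays like `|t| ^ (2K - 2 - D)` with `2K ≤ D + 1`.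
  obtain ⟨u, hu, hO⟩ := exists_tendsto_isBigO_jordanFlow (D := D) (K := (D + 1) / 2)
    (e := D + 1 - (D + 1) / 2) (by omega)
    (degree_jetPoly_lt (m := D + 1) fun i hi => hx i (by omega)) ht
  rw [jet_jetPoly] at hu
  refine ⟨u, hu, hO.trans_tendsto ?_⟩
  simpa [Function.comp_def] using (tendsto_pow_div_pow_atTop_zero (by omega)).comp ht

theorem subset_jordanCoreCstar (D : ℕ) :
    {x | ∀ i : Fin (D + 1), D < 2 * (i : ℕ) → x i = 0} ⊆ jordanCoreCstar (D + 1) := by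
  intro x hx t ht
  -- `K = ⌊D/2⌋ + 1`, so that `2K ≤ D + 2` and the orbit stays bounded.
  obtain ⟨u, hu, hO⟩ := exists_tendsto_isBigO_jordanFlow (D := D) (K := D / 2 + 1)
    (e := D - D / 2) (by omega)
    (degree_jetPoly_lt (m := D + 1) fun i hi => hx i (by omega)) ht
  rw [jet_jetPoly] at hu
  have hone : (fun n => |t n| ^ (D / 2 + 1) / |t n| ^ (D - D / 2 + 1)) =O[atTop]
      fun _ => (1 : ℝ) := by
    refine IsBigO.of_bound 1 ?_
    filter_upwards [ht.eventually_ge_atTop 1] with n hn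
    rw [Real.norm_eq_abs, abs_of_nonneg (by positivity), norm_one, one_mul,
      div_le_one (by positivity)]
    exact pow_le_pow_right₀ hn (by omega)
  obtain ⟨M, hM⟩ := ((isBigO_one_iff ℝ).mp (hO.trans hone)).bddAbove_range
  exact ⟨u, hu, M, fun n => hM ⟨n, rfl⟩⟩

theorem jordanCoreC0star_subset_jordanCoreC0 (m : ℕ) :
    jordanCoreC0star m ⊆ jordanCoreC0 m := by
  intro x hx
  have hn := tendsto_natCast_atTop_atTop (R := ℝ)
  obtain ⟨up, hup, hp⟩ := hx (fun n => (n : ℝ)) (by simpa using hn)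
  obtain ⟨um, hum, hm⟩ := hx (fun n => -(n : ℝ)) (by simpa using hn)
  exact ⟨_, _, up, um, hn, tendsto_neg_atTop_atBot.comp hn, hup, hum, hp, hm⟩

theorem jordanCoreCstar_subset_jordanCoreC (m : ℕ) :
    jordanCoreCstar m ⊆ jordanCoreC m := by
  intro x hx
  have hn := tendsto_natCast_atTop_atTop (R := ℝ)
  obtain ⟨up, hup, hp⟩ := hx (fun n => (n : ℝ)) (by simpa using hn)
  obtain ⟨um, hum, hm⟩ := hx (fun n => -(n : ℝ)) (by simpa using hn)
  exact ⟨_, _, up, um, hn, tendsto_neg_atTop_atBot.comp hn, hup, hum, hp, hm⟩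

theorem jordanCoreC0star_eq (D : ℕ) :
    jordanCoreC0star (D + 1) = {x | ∀ i : Fin (D + 1), D ≤ 2 * (i : ℕ) → x i = 0} :=
  ((jordanCoreC0star_subset_jordanCoreC0 _).trans (jordanCoreC0_subset D)).antisymm
    (subset_jordanCoreC0star D)

theorem jordanCoreC0_eq (D : ℕ) :
    jordanCoreC0 (D + 1) = {x | ∀ i : Fin (D + 1), D ≤ 2 * (i : ℕ) → x i = 0} :=
  (jordanCoreC0_subset D).antisymm
    ((subset_jordanCoreC0star D).trans (jordanCoreC0star_subset_jordanCoreC0 _))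

theorem jordanCoreCstar_eq (D : ℕ) :
    jordanCoreCstar (D + 1) = {x | ∀ i : Fin (D + 1), D < 2 * (i : ℕ) → x i = 0} :=
  ((jordanCoreCstar_subset_jordanCoreC _).trans (jordanCoreC_subset D)).antisymm
    (subset_jordanCoreCstar D)

theorem jordanCoreC_eq (D : ℕ) :
    jordanCoreC (D + 1) = {x | ∀ i : Fin (D + 1), D < 2 * (i : ℕ) → x i = 0} :=
  (jordanCoreC_subset D).antisymm
    ((subset_jordanCoreCstar D).trans (jordanCoreCstar_subset_jordanCoreC _))

end JordanFlow

theorem stmt13_general (d : ℕ) :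
    jordanCoreC0star (2 * d + 1)
      = {x : Fin (2 * d + 1) → ℝ | ∀ i : Fin (2 * d + 1), d ≤ (i : ℕ) → x i = 0} ∧
    jordanCoreC0 (2 * d + 1)
      = {x : Fin (2 * d + 1) → ℝ | ∀ i : Fin (2 * d + 1), d ≤ (i : ℕ) → x i = 0} ∧
    jordanCoreCstar (2 * d + 1)
      = {x : Fin (2 * d + 1) → ℝ | ∀ i : Fin (2 * d + 1), d + 1 ≤ (i : ℕ) → x i = 0} ∧
    jordanCoreC (2 * d + 1)
      = {x : Fin (2 * d + 1) → ℝ | ∀ i : Fin (2 * d + 1), d + 1 ≤ (i : ℕ) → x i = 0} := by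
  have hlow : {x : Fin (2 * d + 1) → ℝ | ∀ i : Fin (2 * d + 1), 2 * d ≤ 2 * (i : ℕ) → x i = 0}
      = {x | ∀ i : Fin (2 * d + 1), d ≤ (i : ℕ) → x i = 0} := by
    ext x
    exact forall_congr' fun i => imp_congr_left (by omega)
  have hhigh : {x : Fin (2 * d + 1) → ℝ | ∀ i : Fin (2 * d + 1), 2 * d < 2 * (i : ℕ) → x i = 0}
      = {x | ∀ i : Fin (2 * d + 1), d + 1 ≤ (i : ℕ) → x i = 0} := by
    ext x
    exact forall_congr' fun i => imp_congr_left (by omega)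
  exact ⟨(JordanFlow.jordanCoreC0star_eq _).trans hlow, (JordanFlow.jordanCoreC0_eq _).trans hlow,
    (JordanFlow.jordanCoreCstar_eq _).trans hhigh, (JordanFlow.jordanCoreC_eq _).trans hhigh⟩

/-- For the linear flow generated by the nilpotent Jordan block
`J_{2d+1}` on `ℝ^{2d+1}` (`d ∈ ℕ`, `d ≥ 1`), the uniform `(0,0)`-core and the
`(0,0)`-core equal `span{e_1,…,e_d}`, while the uniform core and the core equal
`span{e_1,…,e_{d+1}}`. -/
theorem stmt13 (d : ℕ) (hd : 0 < d) :
    jordanCoreC0star (2 * d + 1)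
      = {x : Fin (2 * d + 1) → ℝ | ∀ i : Fin (2 * d + 1), d ≤ (i : ℕ) → x i = 0} ∧
    jordanCoreC0 (2 * d + 1)
      = {x : Fin (2 * d + 1) → ℝ | ∀ i : Fin (2 * d + 1), d ≤ (i : ℕ) → x i = 0} ∧
    jordanCoreCstar (2 * d + 1)
      = {x : Fin (2 * d + 1) → ℝ | ∀ i : Fin (2 * d + 1), d + 1 ≤ (i : ℕ) → x i = 0} ∧
    jordanCoreC (2 * d + 1)
      = {x : Fin (2 * d + 1) → ℝ | ∀ i : Fin (2 * d + 1), d + 1 ≤ (i : ℕ) → x i = 0} :=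
  stmt13_general d
end
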